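/- arXiv:2510.07808 — 7 statements merged into one kernel-verified Lean document; each statement's English description precedes it below -/
import Mathlib

section
/- Let T=(V,E) be a tree and let v* ∈ V be arbitrary. Define K = Σ_{v∈V} |P_v|, where P_v is the set of edges on the unique path between v* and v. Then there exists an integer M ≥ 0 and a 5-local function red : {0,1}^{3|V|−1} × {0,1}^M → {0,1}^{2|V|+K} such that, if (X,Y,W) ~ D_host(T) and R ~ U_{1/2}^M are independent, then red((X,Y,W), R) is distributed exactly as D_hard(|V|, |V|+K). -/
open Finset

def tow : ℕ → ℕ
  | 0 => 1
  | x + 1 => 2 ^ tow x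

def hw {ι : Type*} [Fintype ι] (x : ι → Bool) : ℕ :=
  (Finset.univ.filter fun i => x i = true).card

def IsLocal {κ ι : Type*} (d : ℕ) (f : (κ → Bool) → ι → Bool) : Prop :=
  ∀ i : ι, ∃ T : Finset κ, T.card ≤ d ∧
    ∀ x y : κ → Bool, (∀ j ∈ T, x j = y j) → f x i = f y i

def IsProductDist {κ : Type*} [Fintype κ] (p : (κ → Bool) → ℝ) : Prop :=
  ∃ γ : κ → ℝ, (∀ j, 0 ≤ γ j ∧ γ j ≤ 1) ∧
    ∀ x, p x = ∏ j, if x j then γ j else 1 - γ j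

def IsDist {α : Type*} [Fintype α] (p : α → ℝ) : Prop :=
  (∀ a, 0 ≤ p a) ∧ ∑ a, p a = 1

noncomputable def push {α β : Type*} [Fintype α] [DecidableEq β] (f : α → β) (p : α → ℝ) :
    β → ℝ :=
  fun b => ∑ a, if f a = b then p a else 0

noncomputable def tv {α : Type*} [Fintype α] (p q : α → ℝ) : ℝ :=
  (1 / 2) * ∑ a, |p a - q a|

noncomputable def biased {ι : Type*} [Fintype ι] (γ : ℝ) (x : ι → Bool) : ℝ :=
  ∏ i, if x i then γ else 1 - γ

noncomputable def unifParity (ι : Type*) [Fintype ι] [DecidableEq ι] (b : ℕ)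
    (y : ι → Bool) : ℝ :=
  if hw y % 2 = b then
    (1 : ℝ) / ((Finset.univ.filter fun z : ι → Bool => hw z % 2 = b).card : ℝ)
  else 0

noncomputable def dHard (n m : ℕ) (p : (Fin n → Bool) × (Fin m → Bool)) : ℝ :=
  biased (1 / 4) p.1 *
    (if hw p.1 % 2 = 1 then (1 / 2 : ℝ) ^ m
     else unifParity (Fin m) ((hw p.1 / 2) % 2) p.2)

def splitFun (n m : ℕ) (z : Fin (n + m) → Bool) : (Fin n → Bool) × (Fin m → Bool) :=
  (fun i => z (Fin.castAdd m i), fun j => z (Fin.natAdd n j))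

noncomputable def dHard' (n m : ℕ) (z : Fin (n + m) → Bool) : ℝ :=
  dHard n m (splitFun n m z)

def wOf {V : Type*} (Z : V → Bool) : Sym2 V → Bool :=
  Sym2.lift ⟨fun u v => xor (Z u) (Z v), fun u v => Bool.xor_comm _ _⟩

def ip {V : Type*} [Fintype V] (Z X : V → Bool) : ℕ :=
  (Finset.univ.filter fun v => Z v = true ∧ X v = true).card

noncomputable def dHost {V : Type*} [Fintype V] [DecidableEq V] (G : SimpleGraph V)
    [DecidableRel G.Adj] (z : (V ⊕ V ⊕ G.edgeSet) → Bool) : ℝ :=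
  let X : V → Bool := fun v => z (Sum.inl v)
  let Y : V → Bool := fun v => z (Sum.inr (Sum.inl v))
  let W : G.edgeSet → Bool := fun e => z (Sum.inr (Sum.inr e))
  biased (1 / 4) X *
    ∑ Z : V → Bool,
      (1 / 2 : ℝ) ^ (Fintype.card V) *
        (if ∀ e : G.edgeSet, W e = wOf Z e.1 then 1 else 0) *
        (if hw X % 2 = 1 then (1 / 2 : ℝ) ^ (Fintype.card V)
         else unifParity V ((ip Z X + hw X / 2) % 2) Y)

/-!
Work over 𝔽₂ with fresh uniform bits `S₀, …, S_K`, where `K` counts the pairs `(v, e)` of a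
vertex `v` and an edge `e` on the path from `v*` to `v`, numbered `0, …, K - 1`. The reduction
outputs `X` unchanged, `Y` with its bit at `v*` flipped by `S₀ + S_K`, and for the `i`-th pair
`(v, e)` the bit `X_v W_e + S_i + S_{i+1}`; each output bit reads at most four input bits.

Condition on the hidden labelling `Z`. The chain `S` one-time-pads the `K` path bits, which become
uniform, while `S₀ + S_K` equals their parity plus `∑_{(v,e)} X_v W_e`. As `W_e = Z_u + Z_w`, the
edges on the path to `v` sum to `Z_{v*} + Z_v`, so this correction is `|X| Z_{v*} + ⟨Z, X⟩ = ⟨Z, X⟩`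
when `|X|` is even: the flip cancels the `⟨Z, X⟩` in the parity prescribed for `Y`. Hence already
conditioned on `Z` the output is distributed as `D_hard(|V|, |V| + K)`.
-/

-- Mathlib's Boolean ring structure on `Bool` (`+` is `xor`, `*` is `&&`) makes bits elements of 𝔽₂.
instance Bool.instCharPTwo : CharP Bool 2 :=
  CharTwo.of_one_ne_zero_of_two_eq_zero (by decide) (by decide)

lemma natCast_hw {ι : Type*} [Fintype ι] (x : ι → Bool) : (hw x : Bool) = ∑ i, x i := by
  simp only [hw, natCast_card_filter]
  exact Finset.sum_congr rfl fun i _ => by cases x i <;> rfl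

lemma natCast_ip {V : Type*} [Fintype V] (Z X : V → Bool) : (ip Z X : Bool) = ∑ v, Z v * X v := by
  simp only [ip, natCast_card_filter]
  exact Finset.sum_congr rfl fun v _ => by cases Z v <;> cases X v <;> rfl

lemma hw_comp_equiv {ι κ : Type*} [Fintype ι] [Fintype κ] (e : ι ≃ κ) (x : κ → Bool) :
    hw (x ∘ e) = hw x := by
  simp only [hw, card_filter]
  exact e.sum_comp fun k => if x k = true then 1 else 0

lemma Fin.sum_univ_succ_sub_castSucc {M : Type*} [AddCommGroup M] {n : ℕ} (f : Fin (n + 1) → M) :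
    ∑ i : Fin n, (f i.succ - f i.castSucc) = f (Fin.last n) - f 0 := by
  induction n with
  | zero => simp
  | succ n ih =>
    simp_rw [Fin.sum_univ_castSucc, Fin.succ_castSucc, ih (fun i => f i.castSucc), Fin.succ_last,
      Fin.castSucc_zero]
    abel

lemma card_filter_sum_eq {ι : Type*} [Fintype ι] [DecidableEq ι] [Nonempty ι] (c : Bool) :
    #{y : ι → Bool | ∑ i, y i = c} = 2 ^ (Fintype.card ι - 1) := by
  obtain ⟨i₀⟩ := ‹Nonempty ι›
  have hflip : #{y : ι → Bool | ∑ i, y i = c} = #{y : ι → Bool | ∑ i, y i = c + 1} := by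
    refine card_equiv (Equiv.addRight (Pi.single i₀ 1)) fun y => ?_
    simp only [mem_filter, mem_univ, true_and, Equiv.coe_addRight, Pi.add_apply, sum_add_distrib,
      Finset.sum_pi_single', if_true, add_left_inj]
  have hsplit := card_filter_add_card_filter_not (s := univ) fun y : ι → Bool => ∑ i, y i = c
  have hne : ∀ y : ι → Bool, ¬ ∑ i, y i = c ↔ ∑ i, y i = c + 1 := fun y => by
    cases ∑ i, y i <;> cases c <;> decide
  simp only [hne, ← hflip, card_univ, Fintype.card_fun, Fintype.card_bool] at hsplit
  have : 2 ^ Fintype.card ι = 2 * 2 ^ (Fintype.card ι - 1) := by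
    rw [← pow_succ']; congr; have := Fintype.card_pos (α := ι); omega
  omega

lemma unifParity_eq {ι : Type*} [Fintype ι] [DecidableEq ι] [Nonempty ι] (b : ℕ) (y : ι → Bool) :
    unifParity ι (b % 2) y = if (hw y : Bool) = b then (2 ^ (Fintype.card ι - 1) : ℝ)⁻¹ else 0 := by
  have hb : ∀ z : ι → Bool, hw z % 2 = b % 2 ↔ ∑ i, z i = b := fun z => by
    rw [← natCast_hw]; exact (CharP.natCast_eq_natCast Bool 2).symm
  simp only [unifParity, hb, card_filter_sum_eq, natCast_hw]
  push_cast
  rw [one_div]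

lemma sum_chain_eq_two_nsmul {K : ℕ} {M : Type*} [AddCommMonoid M] (c : Fin K → Bool)
    (f : Bool → M) :
    ∑ s : Fin (K + 1) → Bool,
      (if ∀ i, s i.succ + s i.castSucc = c i then f (s (Fin.last K) + s 0) else 0) =
      2 • f (∑ i, c i) := by
  let φ : (Fin (K + 1) → Bool) → Bool × (Fin K → Bool) :=
    fun s => (s 0, fun i => s i.succ + s i.castSucc)
  have hφ : Function.Bijective φ := by
    rw [Fintype.bijective_iff_injective_and_card]
    refine ⟨fun s t hst => funext fun i => ?_, by simp [pow_succ']⟩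
    simp only [φ, Prod.mk.injEq, funext_iff] at hst
    induction i using Fin.induction with
    | zero => exact hst.1
    | succ i ih => linear_combination hst.2 i - ih
  have hterm : ∀ s, (if ∀ i, s i.succ + s i.castSucc = c i then f (s (Fin.last K) + s 0) else 0) =
      if (φ s).2 = c then f (∑ i, (φ s).2 i) else 0 := fun s => by
    simp only [φ, funext_iff]
    split_ifs with h
    · congr 1; exact (Fin.sum_univ_succ_sub_castSucc s).symm
    · rfl
  rw [Fintype.sum_congr _ _ hterm,
    Fintype.sum_bijective φ hφ _ (fun q => if q.2 = c then f (∑ i, q.2 i) else 0) fun _ => rfl]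
  simp [Fintype.sum_prod_type]

-- The law of `y` given `x` under `D_hard`, with the prescribed parity shifted by `s`; under
-- `D_host` the law of `Y` given `X` and `Z` is `hardCond X ⟨Z, X⟩ Y`.
noncomputable def hardCond {ι κ : Type*} [Fintype ι] [Fintype κ] [DecidableEq κ]
    (x : ι → Bool) (s : ℕ) (y : κ → Bool) : ℝ :=
  if hw x % 2 = 1 then (1 / 2) ^ Fintype.card κ else unifParity κ ((s + hw x / 2) % 2) y

noncomputable def hardDist {ι κ : Type*} [Fintype ι] [Fintype κ] [DecidableEq κ]
    (x : ι → Bool) (y : κ → Bool) : ℝ :=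
  biased (1 / 4) x * hardCond x 0 y

lemma hardDist_comp_equiv {ι ι' κ κ' : Type*} [Fintype ι] [Fintype ι'] [Fintype κ] [Fintype κ']
    [DecidableEq κ] [DecidableEq κ'] (e : ι ≃ ι') (e' : κ ≃ κ') (x : ι' → Bool) (y : κ' → Bool) :
    hardDist (x ∘ e) (y ∘ e') = hardDist x y := by
  have hbiased : biased (1 / 4 : ℝ) (x ∘ e) = biased (1 / 4) x :=
    e.prod_comp fun i => if x i then (1 / 4 : ℝ) else 1 - 1 / 4
  have hcard : ∀ b, #{z : κ → Bool | hw z % 2 = b} = #{z : κ' → Bool | hw z % 2 = b} := fun b =>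
    card_equiv (e'.arrowCongr (Equiv.refl Bool)) fun z => by
      simp only [mem_filter, mem_univ, true_and, ← hw_comp_equiv e'.symm z]; rfl
  simp only [hardDist, hardCond, unifParity, hbiased, hw_comp_equiv, hcard, Fintype.card_congr e']

lemma dHard'_eq_hardDist {n m : ℕ} {ι κ : Type*} [Fintype ι] [Fintype κ] [DecidableEq κ]
    (e : Fin n ≃ ι) (e' : Fin m ≃ κ) (b : Fin (n + m) → Bool) :
    dHard' n m b =
      hardDist (fun i => b (Fin.castAdd m (e.symm i))) (fun k => b (Fin.natAdd n (e'.symm k))) := by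
  rw [← hardDist_comp_equiv e e']
  simp [dHard', dHard, splitFun, hardDist, hardCond, Function.comp_def]

lemma hardCond_flip {ι κ P : Type*} [Fintype ι] [Fintype κ] [Fintype P] [DecidableEq κ]
    [DecidableEq P] (x : ι → Bool) (s : ℕ) (w : κ ⊕ P → Bool) (v₀ : κ) (ρ : Bool)
    (hρ : hw x % 2 = 0 → ρ = ∑ p, w (.inr p) + s) :
    hardCond x s (fun v => w (.inl v) + if v = v₀ then ρ else 0) =
      2 ^ Fintype.card P * hardCond x 0 w := by
  have : Nonempty κ := ⟨v₀⟩
  have hκ : 0 < Fintype.card κ := Fintype.card_pos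
  have hcard : Fintype.card (κ ⊕ P) - 1 = (Fintype.card κ - 1) + Fintype.card P := by
    rw [Fintype.card_sum]; omega
  unfold hardCond
  split_ifs with hx
  · rw [Fintype.card_sum, pow_add]; field_simp; simp
  · rw [unifParity_eq, unifParity_eq, hcard]
    have hcond : (hw (fun v => w (.inl v) + if v = v₀ then ρ else 0) : Bool) =
        ((s + hw x / 2 : ℕ) : Bool) ↔ (hw w : Bool) = ((0 + hw x / 2 : ℕ) : Bool) := by
      simp only [natCast_hw, sum_add_distrib, Finset.sum_ite_eq', mem_univ, if_true,
        hρ (by omega), Fintype.sum_sum_type, Nat.cast_add, zero_add]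
      constructor <;> intro h <;> linear_combination h
    rw [if_congr hcond rfl rfl]
    split_ifs
    · rw [pow_add]; field_simp
    · simp

lemma IsLocal.mono {κ ι : Type*} {d d' : ℕ} {f : (κ → Bool) → ι → Bool} (hf : IsLocal d f)
    (h : d ≤ d') : IsLocal d' f :=
  fun i => (hf i).imp fun _ hT => ⟨hT.1.trans h, hT.2⟩

lemma IsLocal.comp_right {κ ι ι' : Type*} {d : ℕ} {f : (κ → Bool) → ι → Bool} (hf : IsLocal d f)
    (e : ι' → ι) : IsLocal d fun x i => f x (e i) :=
  fun i => hf (e i)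

lemma push_comp_equiv {α ι ι' : Type*} [Fintype α] [DecidableEq (ι → Bool)]
    [DecidableEq (ι' → Bool)] (f : α → ι → Bool) (e : ι' ≃ ι) (p : α → ℝ) (b : ι' → Bool) :
    push (fun a i => f a (e i)) p b = push f p fun o => b (e.symm o) := by
  refine Finset.sum_congr rfl fun a _ => if_congr ?_ rfl rfl
  constructor
  · rintro rfl; ext; simp
  · rintro h; ext; simp [h]

lemma push_sum_mul {α β ι : Type*} [Fintype α] [DecidableEq β] [Fintype ι] (f : α → β)
    (c : ι → ℝ) (p : ι → α → ℝ) (b : β) :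
    push f (fun a => ∑ j, c j * p j a) b = ∑ j, c j * push f (p j) b := by
  simp only [push, mul_sum]
  rw [Finset.sum_comm]
  exact Finset.sum_congr rfl fun a _ => by split_ifs <;> simp

lemma Fintype.sum_sumElim_arrow {α β γ M : Type*} [Fintype α] [Fintype β] [DecidableEq α]
    [DecidableEq β] [Fintype γ] [AddCommMonoid M] (f : (α ⊕ β → γ) → M) :
    ∑ z, f z = ∑ y : β → γ, ∑ x : α → γ, f (Sum.elim x y) := by
  rw [← (Equiv.sumArrowEquivProdArrow α β γ).symm.sum_comp, Fintype.sum_prod_type_right]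
  rfl

section PathReduction

variable {V : Type*} [DecidableEq V] {G : SimpleGraph V} {d : V → ℕ} {K : ℕ} (vstar : V)
  (edge : (Σ v, Fin (d v)) → G.edgeSet) (idx : (Σ v, Fin (d v)) ≃ Fin K)

-- `Σ v, Fin (d v)` indexes the steps of the paths from `vstar`, `edge p` is the edge crossed at
-- step `p`, and `idx` numbers the steps so that step `p` is masked by `S (idx p) + S (idx p + 1)`.
def pathReduction (z : (V ⊕ V ⊕ G.edgeSet) ⊕ Fin (K + 1) → Bool) :
    V ⊕ V ⊕ (Σ v, Fin (d v)) → Bool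
  | .inl v => z (.inl (.inl v))
  | .inr (.inl v) =>
    z (.inl (.inr (.inl v))) + if v = vstar then z (.inr (Fin.last K)) + z (.inr 0) else 0
  | .inr (.inr p) => z (.inl (.inl p.1)) * z (.inl (.inr (.inr (edge p)))) +
      (z (.inr (idx p).succ) + z (.inr (idx p).castSucc))

lemma isLocal_pathReduction : IsLocal 4 (pathReduction vstar edge idx) := by
  rintro (v | v | p)
  · exact ⟨{.inl (.inl v)}, by simp, fun x y h => by simp [pathReduction, h]⟩
  · exact ⟨{.inl (.inr (.inl v)), .inr (Fin.last K), .inr 0}, card_le_three.trans (by norm_num),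
      fun x y h => by simp [pathReduction, h]⟩
  · exact ⟨{.inl (.inl p.1), .inl (.inr (.inr (edge p))), .inr (idx p).succ, .inr (idx p).castSucc},
      card_le_four, fun x y h => by simp [pathReduction, h]⟩

lemma pathReduction_sumElim_eq_iff (X Y : V → Bool) (W : G.edgeSet → Bool)
    (S : Fin (K + 1) → Bool) (b : V ⊕ V ⊕ (Σ v, Fin (d v)) → Bool) :
    pathReduction vstar edge idx (Sum.elim (Sum.elim X (Sum.elim Y W)) S) = b ↔
      X = (fun v => b (.inl v)) ∧
      Y = (fun v => b (.inr (.inl v)) + if v = vstar then S (Fin.last K) + S 0 else 0) ∧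
      ∀ i, S i.succ + S i.castSucc =
        b (.inr (.inr (idx.symm i))) + X (idx.symm i).1 * W (edge (idx.symm i)) := by
  simp only [funext_iff, Sum.forall, pathReduction, Sum.elim_inl, Sum.elim_inr,
    ← idx.symm.forall_congr_right (q := fun p => _ = b (.inr (.inr p))), Equiv.apply_symm_apply]
  refine and_congr Iff.rfl (and_congr (forall_congr' fun v => ?_) (forall_congr' fun i => ?_)) <;>
    grind

variable [Fintype V] [DecidableRel G.Adj]

-- `D_host(T)` conditioned on the hidden labelling `Z`.
variable (G) in
noncomputable def hostGiven (Z : V → Bool) (z : V ⊕ V ⊕ G.edgeSet → Bool) : ℝ :=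
  if (fun e => z (.inr (.inr e))) = (fun e : G.edgeSet => wOf Z e) then
    biased (1 / 4) (fun v => z (.inl v)) *
      hardCond (fun v => z (.inl v)) (ip Z fun v => z (.inl v)) (fun v => z (.inr (.inl v)))
  else 0

lemma dHost_eq_sum_hostGiven (z : V ⊕ V ⊕ G.edgeSet → Bool) :
    dHost G z = ∑ Z, (1 / 2) ^ Fintype.card V * hostGiven G Z z := by
  simp only [dHost, hostGiven, hardCond, mul_sum, funext_iff]
  exact sum_congr rfl fun Z _ => by split_ifs <;> ring

omit [DecidableEq V] [DecidableRel G.Adj] in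
lemma sum_mul_wOf_edge (Z : V → Bool) (hedge : ∀ v, ∑ j, wOf Z (edge ⟨v, j⟩) = Z vstar + Z v)
    (X : V → Bool) (hX : hw X % 2 = 0) : ∑ p, X p.1 * wOf Z (edge p) = ip Z X := by
  have hX' : ∑ v, X v = 0 := by
    rw [← natCast_hw, CharP.natCast_eq_natCast_mod Bool 2, hX, Nat.cast_zero]
  simp_rw [Fintype.sum_sigma, ← mul_sum, hedge, mul_add, sum_add_distrib, ← sum_mul, hX',
    zero_mul, zero_add, natCast_ip, mul_comm]

theorem push_pathReduction_hostGiven (Z : V → Bool)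
    (hedge : ∀ v, ∑ j, wOf Z (edge ⟨v, j⟩) = Z vstar + Z v)
    (b : V ⊕ V ⊕ (Σ v, Fin (d v)) → Bool) :
    push (pathReduction vstar edge idx)
        (fun z => hostGiven G Z (fun i => z (.inl i)) * (1 / 2) ^ (K + 1)) b =
      hardDist (fun v => b (.inl v)) (fun o => b (.inr o)) := by
  simp only [push, Fintype.sum_sumElim_arrow, Sum.elim_inl, pathReduction_sumElim_eq_iff,
    ite_and, Fintype.sum_ite_eq']
  rw [Finset.sum_comm, Fintype.sum_eq_single fun e : G.edgeSet => wOf Z e]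
  swap
  · intro W hW
    simp [hostGiven, hW]
  simp only [hostGiven, Sum.elim_inl, Sum.elim_inr, if_true]
  rw [sum_chain_eq_two_nsmul _ fun r => biased (1 / 4) (fun v => b (.inl v)) *
    hardCond (fun v => b (.inl v)) (ip Z fun v => b (.inl v))
      (fun v => b (.inr (.inl v)) + if v = vstar then r else 0) * (1 / 2) ^ (K + 1)]
  rw [hardCond_flip _ _ (fun o => b (.inr o)) vstar _ fun hx => ?_, Fintype.card_congr idx,
    Fintype.card_fin, hardDist, nsmul_eq_mul]
  · simp only [one_div, inv_pow, pow_succ, Nat.cast_ofNat]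
    field_simp
  · rw [sum_add_distrib, idx.symm.sum_comp (fun p => b (.inr (.inr p))),
      idx.symm.sum_comp (fun p => b (.inl p.1) * wOf Z (edge p)),
      sum_mul_wOf_edge vstar edge Z hedge _ hx]

theorem push_pathReduction_dHost (hedge : ∀ Z v, ∑ j, wOf Z (edge ⟨v, j⟩) = Z vstar + Z v)
    (b : V ⊕ V ⊕ (Σ v, Fin (d v)) → Bool) :
    push (pathReduction vstar edge idx)
        (fun z => dHost G (fun i => z (.inl i)) * (1 / 2) ^ (K + 1)) b =
      hardDist (fun v => b (.inl v)) (fun o => b (.inr o)) := by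
  simp_rw [dHost_eq_sum_hostGiven, sum_mul, mul_assoc]
  rw [push_sum_mul]
  simp_rw [push_pathReduction_hostGiven vstar edge idx _ (hedge _), ← sum_mul, sum_const,
    card_univ, Fintype.card_fun, Fintype.card_bool]
  simp

end PathReduction

lemma SimpleGraph.Walk.sum_wOf_getVert {V : Type*} {G : SimpleGraph V} {u v : V} (w : G.Walk u v)
    (Z : V → Bool) : ∑ j ∈ range w.length, wOf Z s(w.getVert j, w.getVert (j + 1)) = Z u + Z v := by
  have h := Finset.sum_range_sub' (fun j => Z (w.getVert j)) w.length
  rw [SimpleGraph.Walk.getVert_zero, SimpleGraph.Walk.getVert_length] at h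
  exact h

lemma SimpleGraph.Connected.exists_edge_paths {V : Type*} {G : SimpleGraph V} (hG : G.Connected)
    (vstar : V) : ∃ edge : (Σ v, Fin (G.dist vstar v)) → G.edgeSet,
      ∀ Z v, ∑ j, wOf Z (edge ⟨v, j⟩) = Z vstar + Z v := by
  choose w hw using fun v => (hG.preconnected vstar v).exists_walk_length_eq_dist
  refine ⟨fun p => ⟨s((w p.1).getVert p.2, (w p.1).getVert (p.2 + 1)),
    (w p.1).adj_getVert_succ (by rw [hw]; exact p.2.isLt)⟩, fun Z v => ?_⟩
  rw [Fin.sum_univ_eq_sum_range (fun j => wOf Z s((w v).getVert j, (w v).getVert (j + 1))), ← hw v]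
  exact (w v).sum_wOf_getVert Z

theorem stmt3 {V : Type} [Fintype V] [DecidableEq V] (G : SimpleGraph V) [DecidableRel G.Adj]
    (hT : G.IsTree) (vstar : V) (K : ℕ) (hK : K = ∑ v : V, G.dist vstar v) :
    ∃ (M : ℕ) (red : (((V ⊕ V ⊕ G.edgeSet) ⊕ Fin M) → Bool) →
        Fin (Fintype.card V + (Fintype.card V + K)) → Bool),
      IsLocal 5 red ∧
      push red (fun z => dHost G (fun i => z (Sum.inl i)) * (1 / 2 : ℝ) ^ M) =
        dHard' (Fintype.card V) (Fintype.card V + K) := by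
  obtain ⟨edge, hedge⟩ := hT.connected.exists_edge_paths vstar
  have hP : Fintype.card (Σ v, Fin (G.dist vstar v)) = K := by simp [hK]
  let idx := Fintype.equivFinOfCardEq hP
  let ε := (Fintype.equivFin V).symm
  let τ := finSumFinEquiv.symm.trans (ε.sumCongr idx.symm)
  let ψ := finSumFinEquiv.symm.trans (ε.sumCongr τ)
  refine ⟨K + 1, fun z i => pathReduction vstar edge idx z (ψ i),
    ((isLocal_pathReduction vstar edge idx).mono (by norm_num)).comp_right ψ, funext fun b => ?_⟩
  rw [push_comp_equiv, push_pathReduction_dHost vstar edge idx hedge, dHard'_eq_hardDist ε τ]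
  simp [ψ]
end

section
/- Let d, n, m, r, t ≥ 1 be integers, f : {0,1}^N → {0,1}^{n+m} a d-local function, Π a binary product distribution on {0,1}^N, S a set of input bits, ρ ∈ {0,1}^S a fixing of the bits in S, and i_1, …, i_r distinct indices in [n] such that I_S(u) ∩ I_S(v) = ∅ for all distinct j, j' ∈ [r], all u ∈ N_S(i_j) ∩ [n], and all v ∈ N_S(i_{j'}) ∩ [n], and each N_S(i_j) ∩ [n] has size at most t. If for at least r/2 of the indices j ∈ [r] the marginal distribution of f_ρ(Π) on the coordinates N_S(i_j) ∩ [n] is 2^{−5t}-far in total variation distance from the (1/4)-biased product distribution on those coordinates, then the total variation distance between f_ρ(Π) and D_hard(n,m) is at least 1 − 2·exp(−r/2^{12t}). -/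
open Finset

def depSet {κ ι : Type*} [Fintype κ] [DecidableEq κ] [DecidableEq ι]
    (f : (κ → Bool) → ι → Bool) (i : ι) : Finset κ :=
  Finset.univ.filter fun j =>
    ∃ x : κ → Bool, f x i ≠ f (Function.update x j (!x j)) i

def nbhd {κ ι : Type*} [Fintype κ] [DecidableEq κ] [Fintype ι] [DecidableEq ι]
    (f : (κ → Bool) → ι → Bool) (S : Finset κ) (i : ι) : Finset ι :=
  Finset.univ.filter fun i' => ((depSet f i \ S) ∩ (depSet f i' \ S)).Nonempty

def restrictF {κ ι : Type*} [DecidableEq κ] (f : (κ → Bool) → ι → Bool)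
    (S : Finset κ) (ρ : κ → Bool) : (κ → Bool) → ι → Bool :=
  fun x => f (fun j => if j ∈ S then ρ j else x j)

noncomputable def marg {ι : Type*} [Fintype ι] [DecidableEq ι]
    (p : (ι → Bool) → ℝ) (B : Finset ι) : ({ i // i ∈ B } → Bool) → ℝ :=
  push (fun z (b : { i // i ∈ B }) => z b.1) p

lemma sum_pi_prod {ι : Type*} [Fintype ι] [DecidableEq ι] {α : ι → Type*}
    [∀ i, Fintype (α i)] [∀ i, DecidableEq (α i)] (F : ∀ i, α i → ℝ) :
    ∑ x : ∀ i, α i, ∏ i, F i (x i) = ∏ i, ∑ a, F i a := by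
  rw [Finset.prod_univ_sum (fun _ => Finset.univ) F, Fintype.piFinset_univ]

lemma sum_prod_bool {κ : Type*} [Fintype κ] [DecidableEq κ] (τ : κ → Bool → ℝ) :
    ∑ x : κ → Bool, ∏ k, τ k (x k) = ∏ k, (τ k false + τ k true) := by
  rw [sum_pi_prod]
  congr 1; funext k; simp [Fintype.sum_bool, add_comm]

/-- two independent functions over a product measure -/
lemma indep_two {κ : Type*} [Fintype κ] [DecidableEq κ] (ν : κ → Bool → ℝ)
    (hν : ∀ k, ν k false + ν k true = 1) (A : Finset κ) (F G : (κ → Bool) → ℝ)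
    (hF : ∀ x y, (∀ k ∈ A, x k = y k) → F x = F y)
    (hG : ∀ x y, (∀ k ∉ A, x k = y k) → G x = G y) :
    (∑ x : κ → Bool, F x * ∏ k, ν k (x k)) * (∑ y : κ → Bool, G y * ∏ k, ν k (y k)) =
      ∑ x : κ → Bool, F x * G x * ∏ k, ν k (x k) := by
  classical
  set μ : (κ → Bool) → ℝ := fun x => ∏ k, ν k (x k) with hμ
  have hμ1 : ∑ y : κ → Bool, μ y = 1 := by
    rw [hμ]; rw [sum_prod_bool]; simp [hν]
  set c : (κ → Bool) → (κ → Bool) → (κ → Bool) := fun x y k => if k ∈ A then x k else y k with hc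
  set σ : ((κ → Bool) × (κ → Bool)) → ((κ → Bool) × (κ → Bool)) :=
    fun p => (c p.1 p.2, c p.2 p.1) with hσ
  have hinv : Function.Involutive σ := by
    intro p
    refine Prod.ext ?_ ?_ <;> (funext k; by_cases h : k ∈ A <;> simp [hσ, hc, h])
  calc (∑ x : κ → Bool, F x * μ x) * (∑ y : κ → Bool, G y * μ y)
      = ∑ p : (κ → Bool) × (κ → Bool), F p.1 * G p.2 * (μ p.1 * μ p.2) := by
        rw [Finset.sum_mul_sum, Fintype.sum_prod_type]
        apply Finset.sum_congr rfl; intro x _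
        apply Finset.sum_congr rfl; intro y _
        ring
    _ = ∑ p : (κ → Bool) × (κ → Bool), F (σ p).1 * G (σ p).2 * (μ (σ p).1 * μ (σ p).2) :=
        (Fintype.sum_bijective σ hinv.bijective _ _ (fun p => rfl)).symm
    _ = ∑ p : (κ → Bool) × (κ → Bool), F p.1 * G p.1 * (μ p.1 * μ p.2) := by
        congr 1; funext p
        have e1 : F (σ p).1 = F p.1 := by
          apply hF; intro k hk; simp [hσ, hc, hk]
        have e2 : G (σ p).2 = G p.1 := by
          apply hG; intro k hk; simp [hσ, hc, hk]
        have e3 : μ (σ p).1 * μ (σ p).2 = μ p.1 * μ p.2 := by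
          simp only [hμ, hσ, hc, ← Finset.prod_mul_distrib]
          congr 1; funext k; by_cases h : k ∈ A <;> simp [h, mul_comm]
        rw [e1, e2, e3]
    _ = ∑ x : κ → Bool, F x * G x * μ x := by
        rw [Fintype.sum_prod_type]
        congr 1; funext x
        rw [show (fun y => F x * G x * (μ x * μ y)) = fun y => (F x * G x * μ x) * μ y from
          funext fun y => by ring, ← Finset.mul_sum, hμ1, mul_one]

lemma indep_many {κ ι' : Type*} [Fintype κ] [DecidableEq κ] [DecidableEq ι']
    (ν : κ → Bool → ℝ) (hν : ∀ k, ν k false + ν k true = 1)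
    (D : ι' → Finset κ) (F : ι' → (κ → Bool) → ℝ) (s : Finset ι')
    (hD : ∀ j ∈ s, ∀ j' ∈ s, j ≠ j' → Disjoint (D j) (D j'))
    (hdep : ∀ j ∈ s, ∀ x y, (∀ k ∈ D j, x k = y k) → F j x = F j y) :
    ∑ x : κ → Bool, (∏ j ∈ s, F j x) * ∏ k, ν k (x k) =
      ∏ j ∈ s, ∑ x : κ → Bool, F j x * ∏ k, ν k (x k) := by
  classical
  induction s using Finset.induction_on with
  | empty =>
      simp only [Finset.prod_empty, one_mul]
      rw [sum_prod_bool]; simp [hν]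
  | @insert a s ha ih =>
      simp only [Finset.prod_insert ha]
      have hG : ∀ x y : (κ → Bool), (∀ k ∉ D a, x k = y k) →
          (∏ j ∈ s, F j x) = ∏ j ∈ s, F j y := by
        intro x y hxy
        apply Finset.prod_congr rfl
        intro j hj
        apply hdep j (Finset.mem_insert_of_mem hj)
        intro k hk
        apply hxy
        have hdisj := hD a (Finset.mem_insert_self a s) j (Finset.mem_insert_of_mem hj)
          (fun h => ha (h ▸ hj))
        exact fun hka => (Finset.disjoint_left.mp hdisj hka) hk
      have key := indep_two ν hν (D a) (F a) (fun x => ∏ j ∈ s, F j x)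
        (hdep a (Finset.mem_insert_self a s)) hG
      rw [← key, ih
        (fun j hj j' hj' => hD j (Finset.mem_insert_of_mem hj) j' (Finset.mem_insert_of_mem hj'))
        (fun j hj => hdep j (Finset.mem_insert_of_mem hj))]

lemma sum_indicator_embed {κ β : Type*} [Fintype κ] [DecidableEq κ] [Fintype β]
    (ν : κ → Bool → ℝ) (hν : ∀ k, ν k false + ν k true = 1)
    (e : β → κ) (he : Function.Injective e) (w : β → Bool) :
    ∑ x : κ → Bool, (if (∀ b, x (e b) = w b) then (1:ℝ) else 0) * ∏ k, ν k (x k) =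
      ∏ b, ν (e b) (w b) := by
  classical
  set τ : κ → Bool → ℝ := fun k c => (if (∀ b, e b = k → c = w b) then (1:ℝ) else 0) * ν k c
    with hτ
  have hpt : ∀ x : κ → Bool,
      (if (∀ b, x (e b) = w b) then (1:ℝ) else 0) * ∏ k, ν k (x k) = ∏ k, τ k (x k) := by
    intro x
    rw [hτ]
    simp only
    rw [Finset.prod_mul_distrib, Finset.prod_boole]
    congr 2
    simp only [eq_iff_iff]
    constructor
    · intro h k _ b hbk; subst hbk; exact h b
    · intro h b; exact h (e b) (Finset.mem_univ _) b rfl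
  rw [Finset.sum_congr rfl (fun x _ => hpt x), sum_prod_bool]
  have himg : ∀ k ∈ Finset.univ, k ∉ Finset.univ.image e → τ k false + τ k true = 1 := by
    intro k _ hk
    have hnb : ∀ b : β, e b ≠ k := by
      intro b hbk; exact hk (Finset.mem_image.mpr ⟨b, Finset.mem_univ b, hbk⟩)
    rw [hτ]
    simp only
    rw [if_pos (fun b hbk => absurd hbk (hnb b)), if_pos (fun b hbk => absurd hbk (hnb b))]
    simpa using hν k
  rw [← Finset.prod_subset (Finset.subset_univ (Finset.univ.image e)) himg,
    Finset.prod_image (fun a _ b _ h => he h)]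
  apply Finset.prod_congr rfl
  intro b _
  have hcond : ∀ c : Bool, (∀ b', e b' = e b → c = w b') ↔ c = w b := by
    intro c
    constructor
    · intro h; exact h b rfl
    · intro h b' hb'; rw [he hb']; exact h
  rw [hτ]
  simp only
  cases hwb : w b
  · rw [if_pos ((hcond false).mpr (by rw [hwb])), if_neg (fun h => by simpa [hwb] using (hcond true).mp h)]
    ring
  · rw [if_neg (fun h => by simpa [hwb] using (hcond false).mp h), if_pos ((hcond true).mpr (by rw [hwb]))]
    ring

lemma not_dep {κ ι : Type*} [Fintype κ] [DecidableEq κ] [DecidableEq ι]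
    (f : (κ → Bool) → ι → Bool) (i : ι) {k : κ} (hk : k ∉ depSet f i)
    (x : κ → Bool) (b : Bool) : f x i = f (Function.update x k b) i := by
  simp only [depSet, mem_filter, mem_univ, true_and, not_exists, not_ne_iff] at hk
  rcases Bool.eq_or_eq_not b (x k) with h | h
  · subst h; rw [Function.update_eq_self]
  · subst h; exact hk x

lemma eq_of_agree_on_depSet {κ ι : Type*} [Fintype κ] [DecidableEq κ] [DecidableEq ι]
    (f : (κ → Bool) → ι → Bool) (i : ι) :
    ∀ x y : κ → Bool, (∀ k ∈ depSet f i, x k = y k) → f x i = f y i := by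
  intro x y
  generalize hc : (Finset.univ.filter fun k => x k ≠ y k).card = c
  induction c using Nat.strong_induction_on generalizing x y with
  | _ c ih =>
    intro hagree
    rcases Nat.eq_zero_or_pos c with h0 | hpos
    · subst h0
      have : ∀ k, x k = y k := by
        intro k
        by_contra hk
        have : k ∈ Finset.univ.filter fun k => x k ≠ y k := by simp [hk]
        rw [Finset.card_eq_zero.mp hc] at this; simp at this
      exact congrArg (fun z => f z i) (funext this)
    · have hne : (Finset.univ.filter fun k => x k ≠ y k).Nonempty := by
        rw [← Finset.card_pos, hc]; exact hpos
      obtain ⟨k, hk⟩ := hne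
      simp only [mem_filter, mem_univ, true_and] at hk
      have hknd : k ∉ depSet f i := fun h => hk (hagree k h)
      set x' := Function.update x k (y k) with hx'
      have h1 : f x i = f x' i := not_dep f i hknd x (y k)
      have hcard : (Finset.univ.filter fun k => x' k ≠ y k).card < c := by
        rw [← hc]
        apply Finset.card_lt_card
        constructor
        · intro j hj
          simp only [mem_filter, mem_univ, true_and, hx'] at hj ⊢
          by_cases hjk : j = k
          · subst hjk; simp [Function.update_self] at hj
          · rwa [Function.update_of_ne hjk] at hj
        · intro hsub
          have : k ∈ Finset.univ.filter fun j => x' j ≠ y j := hsub (by simp [hk])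
          simp [hx', Function.update_self] at this
      have h2 : f x' i = f y i := by
        apply ih _ hcard x' y rfl
        intro j hj
        by_cases hjk : j = k
        · subst hjk; simp [hx', Function.update_self]
        · rw [hx', Function.update_of_ne hjk]; exact hagree j hj
      rw [h1, h2]

noncomputable def aff {α : Type*} [Fintype α] (p q : α → ℝ) : ℝ :=
  ∑ a, Real.sqrt (p a * q a)

lemma sqrt_facts {a b : ℝ} (ha : 0 ≤ a) (hb : 0 ≤ b) :
    |a - b| = |Real.sqrt a - Real.sqrt b| * (Real.sqrt a + Real.sqrt b) ∧
      a + b - 2 * Real.sqrt (a * b) ≤ |a - b| := by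
  have ha' := Real.mul_self_sqrt ha
  have hb' := Real.mul_self_sqrt hb
  have h1 : a - b = (Real.sqrt a - Real.sqrt b) * (Real.sqrt a + Real.sqrt b) := by
    have h : (Real.sqrt a - Real.sqrt b) * (Real.sqrt a + Real.sqrt b)
        = Real.sqrt a * Real.sqrt a - Real.sqrt b * Real.sqrt b := by ring
    rw [h, ha', hb']
  have hs : (0:ℝ) ≤ Real.sqrt a + Real.sqrt b :=
    add_nonneg (Real.sqrt_nonneg a) (Real.sqrt_nonneg b)
  have habs : |a - b| = |Real.sqrt a - Real.sqrt b| * (Real.sqrt a + Real.sqrt b) := by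
    rw [h1, abs_mul, abs_of_nonneg hs]
  refine ⟨habs, ?_⟩
  have h2 : a + b - 2 * Real.sqrt (a * b) = (Real.sqrt a - Real.sqrt b) ^ 2 := by
    rw [Real.sqrt_mul ha, sub_sq, Real.sq_sqrt ha, Real.sq_sqrt hb]; ring
  rw [h2, habs, ← sq_abs]
  have h3 : |Real.sqrt a - Real.sqrt b| ≤ Real.sqrt a + Real.sqrt b :=
    (abs_sub _ _).trans (by rw [abs_of_nonneg (Real.sqrt_nonneg a), abs_of_nonneg (Real.sqrt_nonneg b)])
  rw [sq]
  exact mul_le_mul_of_nonneg_left h3 (abs_nonneg _)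

lemma aff_nonneg {α : Type*} [Fintype α] (p q : α → ℝ) : 0 ≤ aff p q :=
  Finset.sum_nonneg fun a _ => Real.sqrt_nonneg _

lemma one_sub_tv_le_aff {α : Type*} [Fintype α] {p q : α → ℝ}
    (hp : IsDist p) (hq : IsDist q) : 1 - tv p q ≤ aff p q := by
  have h : 2 - 2 * aff p q ≤ ∑ a, |p a - q a| := by
    have hpt : ∀ a : α, p a + q a - 2 * Real.sqrt (p a * q a) ≤ |p a - q a| :=
      fun a => (sqrt_facts (hp.1 a) (hq.1 a)).2
    calc 2 - 2 * aff p q = ∑ a, (p a + q a - 2 * Real.sqrt (p a * q a)) := by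
          unfold aff
          rw [Finset.sum_sub_distrib, Finset.sum_add_distrib, hp.2, hq.2, ← Finset.mul_sum]
          ring
      _ ≤ ∑ a, |p a - q a| := Finset.sum_le_sum fun a _ => hpt a
  unfold tv; linarith

lemma tv_sq_add_aff_sq_le_one {α : Type*} [Fintype α] {p q : α → ℝ}
    (hp : IsDist p) (hq : IsDist q) : (tv p q) ^ 2 ≤ 1 - (aff p q) ^ 2 := by
  have hcs := Finset.sum_mul_sq_le_sq_mul_sq Finset.univ
    (fun a => |Real.sqrt (p a) - Real.sqrt (q a)|) (fun a => Real.sqrt (p a) + Real.sqrt (q a))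
  have e1 : ∑ a, |Real.sqrt (p a) - Real.sqrt (q a)| * (Real.sqrt (p a) + Real.sqrt (q a)) =
      ∑ a, |p a - q a| := by
    apply Finset.sum_congr rfl
    intro a _
    exact ((sqrt_facts (hp.1 a) (hq.1 a)).1).symm
  have e2 : ∑ a, |Real.sqrt (p a) - Real.sqrt (q a)| ^ 2 = 2 - 2 * aff p q := by
    have : ∀ a : α, |Real.sqrt (p a) - Real.sqrt (q a)| ^ 2 =
        p a + q a - 2 * Real.sqrt (p a * q a) := by
      intro a
      rw [sq_abs, sub_sq, Real.sq_sqrt (hp.1 a), Real.sq_sqrt (hq.1 a),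
        Real.sqrt_mul (hp.1 a)]
      ring
    unfold aff
    rw [Finset.sum_congr rfl (fun a _ => this a), Finset.sum_sub_distrib,
      Finset.sum_add_distrib, hp.2, hq.2, ← Finset.mul_sum]
    ring
  have e3 : ∑ a, (Real.sqrt (p a) + Real.sqrt (q a)) ^ 2 = 2 + 2 * aff p q := by
    have : ∀ a : α, (Real.sqrt (p a) + Real.sqrt (q a)) ^ 2 =
        p a + q a + 2 * Real.sqrt (p a * q a) := by
      intro a
      rw [add_sq, Real.sq_sqrt (hp.1 a), Real.sq_sqrt (hq.1 a), Real.sqrt_mul (hp.1 a)]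
      ring
    unfold aff
    rw [Finset.sum_congr rfl (fun a _ => this a), Finset.sum_add_distrib,
      Finset.sum_add_distrib, hp.2, hq.2, ← Finset.mul_sum]
    ring
  rw [e1, e2, e3] at hcs
  have : (∑ a, |p a - q a|) ^ 2 ≤ 4 - 4 * (aff p q) ^ 2 := by nlinarith
  unfold tv
  nlinarith [this]

lemma aff_le_one {α : Type*} [Fintype α] {p q : α → ℝ}
    (hp : IsDist p) (hq : IsDist q) : aff p q ≤ 1 := by
  have h := tv_sq_add_aff_sq_le_one hp hq
  have htv : 0 ≤ (tv p q) ^ 2 := sq_nonneg _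
  nlinarith [aff_nonneg p q]

lemma aff_le_of_tv_ge {α : Type*} [Fintype α] {p q : α → ℝ}
    (hp : IsDist p) (hq : IsDist q) {ε : ℝ} (hε0 : 0 ≤ ε) (hε1 : ε ≤ 1)
    (htv : ε ≤ tv p q) : aff p q ≤ 1 - ε ^ 2 / 2 := by
  have h := tv_sq_add_aff_sq_le_one hp hq
  have h2 : ε ^ 2 ≤ (tv p q) ^ 2 := by nlinarith
  nlinarith [aff_nonneg p q, sq_nonneg (1 - ε ^ 2 / 2 - aff p q), sq_nonneg ε]

lemma sum_pi_prod' {ι : Type*} [Fintype ι] [DecidableEq ι] {α : ι → Type*}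
    [∀ i, Fintype (α i)] [∀ i, DecidableEq (α i)] (F : ∀ i, α i → ℝ) :
    ∑ x : ∀ i, α i, ∏ i, F i (x i) = ∏ i, ∑ a, F i a := by
  rw [Finset.prod_univ_sum (fun _ => Finset.univ) F, Fintype.piFinset_univ]

lemma push_comp {α β γ : Type*} [Fintype α] [Fintype β] [DecidableEq β] [DecidableEq γ]
    (g : α → β) (h : β → γ) (p : α → ℝ) :
    push h (push g p) = push (fun a => h (g a)) p := by
  funext c
  unfold push
  calc (∑ b : β, if h b = c then ∑ a : α, (if g a = b then p a else 0) else 0)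
      = ∑ b : β, ∑ a : α, (if g a = b then (if h b = c then p a else 0) else 0) := by
        apply Finset.sum_congr rfl
        intro b _
        by_cases hb : h b = c
        · simp only [hb, if_true]
        · simp only [hb, if_false, Finset.sum_ite_eq, ite_self]
          simp
    _ = ∑ a : α, ∑ b : β, (if g a = b then (if h b = c then p a else 0) else 0) :=
        Finset.sum_comm
    _ = ∑ a : α, if (fun a => h (g a)) a = c then p a else 0 := by
        apply Finset.sum_congr rfl
        intro a _
        rw [Finset.sum_ite_eq Finset.univ (g a) (fun b => if h b = c then p a else 0)]
        simp

lemma push_isDist {α β : Type*} [Fintype α] [Fintype β] [DecidableEq β]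
    (f : α → β) {p : α → ℝ} (hp : IsDist p) : IsDist (push f p) := by
  constructor
  · intro b
    exact Finset.sum_nonneg fun a _ => by by_cases h : f a = b <;> simp [h, hp.1 a]
  · unfold push
    rw [Finset.sum_comm]
    rw [← hp.2]
    apply Finset.sum_congr rfl
    intro a _
    simp
lemma tv_push_le {α β : Type*} [Fintype α] [Fintype β] [DecidableEq β]
    (f : α → β) (p q : α → ℝ) : tv (push f p) (push f q) ≤ tv p q := by
  unfold tv push
  have h : ∀ b : β, |∑ a, (if f a = b then p a else 0) - ∑ a, (if f a = b then q a else 0)|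
      ≤ ∑ a, if f a = b then |p a - q a| else 0 := by
    intro b
    rw [← Finset.sum_sub_distrib]
    refine (Finset.abs_sum_le_sum_abs _ _).trans ?_
    apply Finset.sum_le_sum
    intro a _
    by_cases h : f a = b <;> simp [h]
  have h2 : ∑ b : β, ∑ a : α, (if f a = b then |p a - q a| else 0) = ∑ a, |p a - q a| := by
    rw [Finset.sum_comm]
    apply Finset.sum_congr rfl
    intro a _
    simp
  have := Finset.sum_le_sum (fun b (_ : b ∈ Finset.univ) => h b)
  rw [h2] at this
  linarith

lemma sqrt_finset_prod {ι : Type*} (s : Finset ι) (f : ι → ℝ) (hf : ∀ i ∈ s, 0 ≤ f i) :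
    Real.sqrt (∏ i ∈ s, f i) = ∏ i ∈ s, Real.sqrt (f i) := by
  classical
  induction s using Finset.induction_on with
  | empty => simp
  | @insert a s ha ih =>
      rw [Finset.prod_insert ha, Finset.prod_insert ha,
        Real.sqrt_mul (hf a (Finset.mem_insert_self a s)),
        ih (fun i hi => hf i (Finset.mem_insert_of_mem hi))]

lemma aff_pi {ι : Type*} [Fintype ι] [DecidableEq ι] {α : ι → Type*}
    [∀ i, Fintype (α i)] [∀ i, DecidableEq (α i)]
    (P Q : ∀ i, α i → ℝ) (hP : ∀ i a, 0 ≤ P i a) (hQ : ∀ i a, 0 ≤ Q i a) :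
    aff (fun w : ∀ i, α i => ∏ i, P i (w i)) (fun w => ∏ i, Q i (w i)) =
      ∏ i, aff (P i) (Q i) := by
  unfold aff
  have h : ∀ w : ∀ i, α i, Real.sqrt ((∏ i, P i (w i)) * ∏ i, Q i (w i)) =
      ∏ i, Real.sqrt (P i (w i) * Q i (w i)) := by
    intro w
    rw [← Finset.prod_mul_distrib, sqrt_finset_prod _ _
      (fun i _ => mul_nonneg (hP i (w i)) (hQ i (w i)))]
  rw [Finset.sum_congr rfl (fun w _ => h w)]
  exact sum_pi_prod' fun i a => Real.sqrt (P i a * Q i a)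

-- join/split equivalence
def joinFun (n m : ℕ) (p : (Fin n → Bool) × (Fin m → Bool)) : Fin (n + m) → Bool :=
  Fin.addCases p.1 p.2

lemma split_join (n m : ℕ) (p : (Fin n → Bool) × (Fin m → Bool)) :
    splitFun n m (joinFun n m p) = p := by
  unfold splitFun joinFun
  refine Prod.ext ?_ ?_
  · funext i; simp [Fin.addCases_left]
  · funext j; simp [Fin.addCases_right]

lemma join_split (n m : ℕ) (z : Fin (n + m) → Bool) :
    joinFun n m (splitFun n m z) = z := by
  funext i
  refine Fin.addCases (fun i0 => ?_) (fun j0 => ?_) i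
  · simp [joinFun, splitFun, Fin.addCases_left]
  · simp [joinFun, splitFun, Fin.addCases_right]

def splitEquiv (n m : ℕ) : ((Fin n → Bool) × (Fin m → Bool)) ≃ (Fin (n + m) → Bool) where
  toFun := joinFun n m
  invFun := splitFun n m
  left_inv p := split_join n m p
  right_inv z := join_split n m z

lemma join_apply_lt (n m : ℕ) (p : (Fin n → Bool) × (Fin m → Bool)) (u : Fin (n + m))
    (hu : (u : ℕ) < n) : joinFun n m p u = p.1 ⟨u, hu⟩ := by
  have : u = Fin.castAdd m ⟨(u : ℕ), hu⟩ := by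
    apply Fin.ext; rfl
  rw [congrArg (joinFun n m p) this]
  unfold joinFun
  exact Fin.addCases_left _

-- hw facts
lemma hw_zero {ι : Type*} [Fintype ι] [DecidableEq ι] : hw (fun _ : ι => false) = 0 := by
  simp [hw]

lemma hw_single {ι : Type*} [Fintype ι] [DecidableEq ι] (i0 : ι) :
    hw (fun i : ι => decide (i = i0)) = 1 := by
  unfold hw
  rw [show (Finset.univ.filter fun i : ι => decide (i = i0) = true) = {i0} from ?_]
  · simp
  · ext i; simp

lemma parity_class_nonempty {ι : Type*} [Fintype ι] [DecidableEq ι] [Nonempty ι] (b : ℕ)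
    (hb : b < 2) :
    0 < (Finset.univ.filter fun z : ι → Bool => hw z % 2 = b).card := by
  rw [Finset.card_pos]
  interval_cases b
  · exact ⟨fun _ => false, by simp [hw_zero]⟩
  · obtain ⟨i0⟩ := ‹Nonempty ι›
    exact ⟨fun i => decide (i = i0), by simp [hw_single]⟩

lemma unifParity_nonneg {ι : Type*} [Fintype ι] [DecidableEq ι] (b : ℕ) (y : ι → Bool) :
    0 ≤ unifParity ι b y := by
  unfold unifParity
  split
  · positivity
  · exact le_refl 0

lemma sum_unifParity {ι : Type*} [Fintype ι] [DecidableEq ι] [Nonempty ι] (b : ℕ)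
    (hb : b < 2) : ∑ y : ι → Bool, unifParity ι b y = 1 := by
  have hc := parity_class_nonempty (ι := ι) b hb
  have hcne : ((Finset.univ.filter fun z : ι → Bool => hw z % 2 = b).card : ℝ) ≠ 0 := by
    exact Nat.cast_ne_zero.mpr hc.ne'
  unfold unifParity
  rw [Finset.sum_ite, Finset.sum_const, Finset.sum_const_zero, add_zero, nsmul_eq_mul]
  rw [mul_one_div, div_self hcne]

lemma sum_pi_prod'' {ι : Type*} [Fintype ι] [DecidableEq ι] {α : ι → Type*}
    [∀ i, Fintype (α i)] [∀ i, DecidableEq (α i)] (F : ∀ i, α i → ℝ) :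
    ∑ x : ∀ i, α i, ∏ i, F i (x i) = ∏ i, ∑ a, F i a := by
  rw [Finset.prod_univ_sum (fun _ => Finset.univ) F, Fintype.piFinset_univ]

lemma biased_nonneg {ι : Type*} [Fintype ι] {γ : ℝ} (h0 : 0 ≤ γ) (h1 : γ ≤ 1)
    (x : ι → Bool) : 0 ≤ biased γ x := by
  unfold biased
  apply Finset.prod_nonneg
  intro i _
  cases x i <;> simp <;> linarith

lemma sum_biased {ι : Type*} [Fintype ι] [DecidableEq ι] (γ : ℝ) :
    ∑ x : ι → Bool, biased γ x = 1 := by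
  unfold biased
  have h := sum_pi_prod'' (fun (_ : ι) (b : Bool) => if b then γ else 1 - γ)
  rw [h]
  simp

lemma ycond_sum {m : ℕ} (hm : 1 ≤ m) (c b : ℕ) (hb : b < 2) :
    ∑ y : Fin m → Bool,
      (if c = 1 then (1 / 2 : ℝ) ^ m else unifParity (Fin m) b y) = 1 := by
  have : Nonempty (Fin m) := ⟨⟨0, hm⟩⟩
  by_cases hc : c = 1
  · simp only [hc, if_true]
    rw [Finset.sum_const, nsmul_eq_mul]
    have hcard : ((Finset.univ : Finset (Fin m → Bool)).card : ℝ) = (2 : ℝ) ^ m := by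
      rw [Finset.card_univ, Fintype.card_fun]
      simp
    rw [hcard, div_pow, one_pow]
    field_simp
  · simp only [hc, if_false]
    exact sum_unifParity _ hb

lemma dHard'_nonneg (n m : ℕ) (z : Fin (n + m) → Bool) : 0 ≤ dHard' n m z := by
  unfold dHard' dHard
  apply mul_nonneg (biased_nonneg (by norm_num) (by norm_num) _)
  split
  · positivity
  · exact unifParity_nonneg _ _

lemma dHard'_sum (n m : ℕ) (hm : 1 ≤ m) : ∑ z : Fin (n + m) → Bool, dHard' n m z = 1 := by
  rw [← Fintype.sum_equiv (splitEquiv n m) (fun p => dHard n m p) (dHard' n m)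
    (fun p => by unfold dHard'; rw [show splitFun n m (splitEquiv n m p) = p from split_join n m p])]
  rw [Fintype.sum_prod_type]
  unfold dHard
  have : ∀ x : Fin n → Bool, ∑ y : Fin m → Bool,
      biased (1/4 : ℝ) x * (if hw x % 2 = 1 then (1 / 2 : ℝ) ^ m
        else unifParity (Fin m) ((hw x / 2) % 2) y) = biased (1/4 : ℝ) x := by
    intro x
    rw [← Finset.mul_sum]
    have h2 : ∑ y : Fin m → Bool,
        (if hw x % 2 = 1 then (1 / 2 : ℝ) ^ m
          else unifParity (Fin m) (((hw x) / 2) % 2) y) = 1 := by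
      exact ycond_sum hm (hw x % 2) _ (Nat.mod_lt _ (by norm_num))
    rw [h2, mul_one]
  rw [Finset.sum_congr rfl (fun x _ => this x)]
  exact sum_biased _


theorem stmt6 (d n m r t N : ℕ) (hd : 1 ≤ d) (hn : 1 ≤ n) (hm : 1 ≤ m) (hr : 1 ≤ r)
    (ht : 1 ≤ t)
    (f : (Fin N → Bool) → Fin (n + m) → Bool) (hf : IsLocal d f)
    (μ : (Fin N → Bool) → ℝ) (hμ : IsProductDist μ)
    (S : Finset (Fin N)) (ρ : Fin N → Bool)
    (idx : Fin r → Fin (n + m)) (hinj : Function.Injective idx)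
    (hin : ∀ j : Fin r, (idx j : ℕ) < n)
    (hdisj : ∀ j j' : Fin r, j ≠ j' →
      ∀ u ∈ (nbhd f S (idx j)).filter (fun u : Fin (n + m) => (u : ℕ) < n),
        ∀ v ∈ (nbhd f S (idx j')).filter (fun v : Fin (n + m) => (v : ℕ) < n),
          Disjoint (depSet f u \ S) (depSet f v \ S))
    (hsize : ∀ j : Fin r,
      ((nbhd f S (idx j)).filter (fun u : Fin (n + m) => (u : ℕ) < n)).card ≤ t)
    (J : Finset (Fin r)) (hJ : r ≤ 2 * J.card)
    (htype1 : ∀ j ∈ J,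
      (1 / 2 : ℝ) ^ (5 * t) ≤
        tv (marg (push (restrictF f S ρ) μ)
              ((nbhd f S (idx j)).filter (fun u : Fin (n + m) => (u : ℕ) < n)))
           (biased (1 / 4))) :
    1 - 2 * Real.exp (-(r : ℝ) / 2 ^ (12 * t)) ≤
      tv (push (restrictF f S ρ) μ) (dHard' n m) := by
  classical
  obtain ⟨γ, hγ, hμeq⟩ := hμ
  set ν : Fin N → Bool → ℝ := fun k b => if b then γ k else 1 - γ k with hνdef
  have hν : ∀ k, ν k false + ν k true = 1 := fun k => by simp [hνdef]
  have hμx : ∀ x, μ x = ∏ k, ν k (x k) := fun x => by rw [hμeq x]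
  have hμdist : IsDist μ := by
    constructor
    · intro x
      rw [hμx]
      apply Finset.prod_nonneg
      intro k _
      simp only [hνdef]
      cases x k
      · simp; linarith [(hγ k).2]
      · simp; exact (hγ k).1
    · rw [Finset.sum_congr rfl fun x _ => hμx x, sum_prod_bool]
      simp [hν]
  set g := restrictF f S ρ with hg
  set p := push g μ with hpdef
  have hp : IsDist p := push_isDist g hμdist
  set B : Fin r → Finset (Fin (n+m)) :=
    fun j => (nbhd f S (idx j)).filter (fun u => (u:ℕ) < n) with hB
  have hBsub : ∀ j, ∀ u ∈ B j, (u:ℕ) < n := fun j u hu => (Finset.mem_filter.mp hu).2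
  have hBne : ∀ j, ∀ u ∈ B j, (depSet f u \ S).Nonempty := by
    intro j u hu
    have := (Finset.mem_filter.mp hu).1
    have h2 := (Finset.mem_filter.mp this).2
    exact h2.mono (Finset.inter_subset_right)
  have hBdisj : ∀ j j' : Fin r, j ≠ j' → Disjoint (B j) (B j') := by
    intro j j' hne
    rw [Finset.disjoint_left]
    intro u hu hu'
    have hd := hdisj j j' hne u hu u hu'
    have hne2 := hBne j u hu
    have hd2 : depSet f u \ S = ∅ := by
      simpa using disjoint_self.mp hd
    rw [hd2] at hne2
    exact Finset.not_nonempty_empty hne2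
  have hDdisj : ∀ j j' : Fin r, j ≠ j' →
      Disjoint ((B j).biUnion (fun u => depSet f u \ S))
        ((B j').biUnion (fun u => depSet f u \ S)) := by
    intro j j' hne
    rw [Finset.disjoint_biUnion_left]
    intro u hu
    rw [Finset.disjoint_biUnion_right]
    intro v hv
    exact hdisj j j' hne u hu v hv
  set e : ∀ j : Fin r, {i // i ∈ B j} → Fin n :=
    fun j b => ⟨(b.1 : ℕ), hBsub j b.1 b.2⟩ with he_def
  have he : ∀ j, Function.Injective (e j) := by
    intro j b b' hbb
    have h1 := congrArg Fin.val hbb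
    simp only [he_def] at h1
    exact Subtype.ext (Fin.ext h1)
  set Φ : (Fin (n+m) → Bool) → (∀ j : Fin r, ({i // i ∈ B j} → Bool)) :=
    fun z j b => z b.1 with hΦ
  set ε : ℝ := (1/2)^(5*t) with hε
  -- the per-block dependency functions
  set h' : ∀ j : Fin r, (Fin N → Bool) → ({i // i ∈ B j} → Bool) :=
    fun j x b => g x b.1 with hh'
  -- step C : pushforward of p is a product of marginals
  have hmargq : ∀ j v, marg p (B j) v =
      ∑ x : Fin N → Bool, (if h' j x = v then (1:ℝ) else 0) * μ x := by
    intro j v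
    rw [hpdef]
    unfold marg
    rw [push_comp]
    unfold push
    apply Finset.sum_congr rfl
    intro x _
    have hrw : (fun (b : {i // i ∈ B j}) => g x b.1) = h' j x := rfl
    rw [boole_mul]
  have hdepj : ∀ j : Fin r, ∀ x y : Fin N → Bool,
      (∀ k ∈ (B j).biUnion (fun u => depSet f u \ S), x k = y k) → h' j x = h' j y := by
    intro j x y hxy
    funext b
    rw [hh']
    simp only
    rw [hg]
    unfold restrictF
    apply eq_of_agree_on_depSet f b.1
    intro k hk
    by_cases hkS : k ∈ S
    · simp [hkS]
    · simp only [hkS, if_false]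
      apply hxy
      exact Finset.mem_biUnion.mpr ⟨b.1, b.2, Finset.mem_sdiff.mpr ⟨hk, hkS⟩⟩
  have hpc : push Φ p = push (fun a => Φ (g a)) μ := by
    rw [hpdef]; exact push_comp g Φ μ
  have hP' : ∀ w, push Φ p w = ∏ j, marg p (B j) (w j) := by
    intro w
    rw [hpc]
    unfold push
    have hpt : ∀ x : Fin N → Bool, (if (fun a => Φ (g a)) x = w then μ x else 0) =
        (∏ j, if h' j x = w j then (1:ℝ) else 0) * ∏ k, ν k (x k) := by
      intro x
      rw [Finset.prod_boole]
      have hiff : (fun a => Φ (g a)) x = w ↔ ∀ j ∈ Finset.univ, h' j x = w j := by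
        simp only [Finset.mem_univ, true_implies]
        constructor
        · intro h j; exact congrFun h j
        · intro h; funext j; exact h j
      by_cases hc : (fun a => Φ (g a)) x = w
      · rw [if_pos hc, if_pos (hiff.mp hc), one_mul, hμx]
      · rw [if_neg hc, if_neg (fun h => hc (hiff.mpr h)), zero_mul]
    rw [Finset.sum_congr rfl fun x _ => hpt x]
    rw [indep_many ν hν (fun j => (B j).biUnion (fun u => depSet f u \ S))
      (fun j x => if h' j x = w j then (1:ℝ) else 0) Finset.univ
      (fun j _ j' _ hne => hDdisj j j' hne)
      (fun j _ x y hxy =>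
        congrArg (fun v => if v = w j then (1:ℝ) else 0) (hdepj j x y hxy))]
    apply Finset.prod_congr rfl
    intro j _
    rw [hmargq j (w j)]
    apply Finset.sum_congr rfl
    intro x _
    rw [hμx x]
  -- step B : pushforward of dHard' is a product of biased measures
  have hQ' : ∀ w, push Φ (dHard' n m) w = ∏ j, biased (1/4 : ℝ) (w j) := by
    intro w
    set ν4 : Fin n → Bool → ℝ := fun _ b => if b then (1/4 : ℝ) else 1 - 1/4 with hν4def
    have hν4 : ∀ k, ν4 k false + ν4 k true = 1 := fun k => by simp [hν4def]
    set Ψ : (Fin n → Bool) → (∀ j : Fin r, ({i // i ∈ B j} → Bool)) :=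
      fun x j b => x (e j b) with hΨ
    have hΦj : ∀ (x : Fin n → Bool) (y : Fin m → Bool),
        Φ (splitEquiv n m (x, y)) = Ψ x := by
      intro x y
      funext j b
      show joinFun n m (x, y) b.1 = x (e j b)
      exact join_apply_lt n m (x, y) b.1 (hBsub j b.1 b.2)
    have hdH : ∀ (x : Fin n → Bool) (y : Fin m → Bool),
        dHard' n m (splitEquiv n m (x, y)) = dHard n m (x, y) := by
      intro x y
      unfold dHard'
      rw [show splitFun n m (splitEquiv n m (x, y)) = (x, y) from split_join n m (x, y)]
    unfold push
    rw [← Fintype.sum_equiv (splitEquiv n m)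
      (fun q => if Φ (splitEquiv n m q) = w then dHard' n m (splitEquiv n m q) else 0)
      (fun z => if Φ z = w then dHard' n m z else 0) (fun q => rfl)]
    rw [Fintype.sum_prod_type]
    have hinner : ∀ x : Fin n → Bool,
        ∑ y : Fin m → Bool, (if Φ (splitEquiv n m (x, y)) = w
            then dHard' n m (splitEquiv n m (x, y)) else 0)
          = (if Ψ x = w then (1:ℝ) else 0) * biased (1/4 : ℝ) x := by
      intro x
      have hy : ∀ y : Fin m → Bool, (if Φ (splitEquiv n m (x, y)) = w
          then dHard' n m (splitEquiv n m (x, y)) else 0)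
            = (if Ψ x = w then (1:ℝ) else 0) * dHard n m (x, y) := by
        intro y
        rw [hΦj x y, hdH x y, boole_mul]
      rw [Finset.sum_congr rfl fun y _ => hy y, ← Finset.mul_sum]
      congr 1
      unfold dHard
      simp only
      rw [← Finset.mul_sum]
      have h2 : ∑ y : Fin m → Bool,
          (if hw x % 2 = 1 then (1 / 2 : ℝ) ^ m
            else unifParity (Fin m) (((hw x) / 2) % 2) y) = 1 :=
        ycond_sum hm (hw x % 2) _ (Nat.mod_lt _ (by norm_num))
      rw [h2, mul_one]
    rw [Finset.sum_congr rfl fun x _ => hinner x]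
    have hbx : ∀ x : Fin n → Bool, biased (1/4 : ℝ) x = ∏ i, ν4 i (x i) := fun x => rfl
    have hpt : ∀ x : Fin n → Bool, (if Ψ x = w then (1:ℝ) else 0) * biased (1/4 : ℝ) x
        = (∏ j, if Ψ x j = w j then (1:ℝ) else 0) * ∏ i, ν4 i (x i) := by
      intro x
      rw [hbx, Finset.prod_boole]
      congr 1
      have hiff : Ψ x = w ↔ ∀ j ∈ Finset.univ, Ψ x j = w j := by
        simp only [Finset.mem_univ, true_implies]
        exact ⟨fun h j => congrFun h j, fun h => funext h⟩
      by_cases hc : Ψ x = w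
      · rw [if_pos hc, if_pos (hiff.mp hc)]
      · rw [if_neg hc, if_neg fun h => hc (hiff.mpr h)]
    rw [Finset.sum_congr rfl fun x _ => hpt x]
    have hDdisj4 : ∀ j j' : Fin r, j ≠ j' →
        Disjoint (Finset.univ.image (e j)) (Finset.univ.image (e j')) := by
      intro j j' hne
      rw [Finset.disjoint_left]
      intro k hk hk'
      obtain ⟨b, _, hb⟩ := Finset.mem_image.mp hk
      obtain ⟨b', _, hb'⟩ := Finset.mem_image.mp hk'
      have hv : ((b.1 : Fin (n+m)) : ℕ) = ((b'.1 : Fin (n+m)) : ℕ) := by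
        have := congrArg Fin.val (hb.trans hb'.symm)
        simpa [he_def] using this
      have hbb : (b.1 : Fin (n+m)) = b'.1 := Fin.ext hv
      have := b'.2
      rw [← hbb] at this
      exact Finset.disjoint_left.mp (hBdisj j j' hne) b.2 this
    rw [indep_many ν4 hν4 (fun j => Finset.univ.image (e j))
      (fun j x => if Ψ x j = w j then (1:ℝ) else 0) Finset.univ
      (fun j _ j' _ hne => hDdisj4 j j' hne)
      (fun j _ x y hxy => by
        have hΨ2 : Ψ x j = Ψ y j := by
          funext b
          exact hxy (e j b) (Finset.mem_image.mpr ⟨b, Finset.mem_univ b, rfl⟩)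
        exact congrArg (fun v => if v = w j then (1:ℝ) else 0) hΨ2)]
    apply Finset.prod_congr rfl
    intro j _
    have hkey := sum_indicator_embed ν4 hν4 (e j) (he j) (w j)
    have hstep : ∑ x : Fin n → Bool,
        (if (∀ b, x (e j b) = w j b) then (1:ℝ) else 0) * ∏ i, ν4 i (x i) =
          biased (1/4 : ℝ) (w j) := by
      rw [hkey]; rfl
    rw [← hstep]
    apply Finset.sum_congr rfl
    intro x _
    exact congrArg (· * ∏ i, ν4 i (x i))
      (if_congr ⟨fun h b => congrFun h b, fun h => funext h⟩ rfl rfl)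
  -- the two pushforwards are distributions
  have hdHdist : IsDist (dHard' n m) :=
    ⟨dHard'_nonneg n m, dHard'_sum n m hm⟩
  have hP'dist : IsDist (push Φ p) := push_isDist Φ hp
  have hQ'dist : IsDist (push Φ (dHard' n m)) := push_isDist Φ hdHdist
  have hqjdist : ∀ j, IsDist (marg p (B j)) := fun j => push_isDist _ hp
  have hbdist : ∀ j : Fin r, IsDist (biased (1/4 : ℝ) :
      ({i // i ∈ B j} → Bool) → ℝ) := by
    intro j
    exact ⟨biased_nonneg (by norm_num) (by norm_num), sum_biased _⟩
  -- affinity factorizes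
  have haff : aff (push Φ p) (push Φ (dHard' n m)) =
      ∏ j, aff (marg p (B j)) (biased (1/4 : ℝ)) := by
    have e1 : push Φ p = fun w => ∏ j, marg p (B j) (w j) := funext hP'
    have e2 : push Φ (dHard' n m) = fun w => ∏ j, biased (1/4 : ℝ) (w j) := funext hQ'
    rw [e1, e2]
    exact aff_pi _ _ (fun j v => (hqjdist j).1 v) (fun j v => (hbdist j).1 v)
  -- numeric bounds
  have hε0 : (0:ℝ) ≤ ε := by positivity
  have hε1 : ε ≤ 1 := by
    rw [hε]
    apply pow_le_one₀ <;> norm_num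
  have haffj_le_one : ∀ j : Fin r, aff (marg p (B j)) (biased (1/4 : ℝ)) ≤ 1 :=
    fun j => aff_le_one (hqjdist j) (hbdist j)
  have haffj_nonneg : ∀ j : Fin r, 0 ≤ aff (marg p (B j)) (biased (1/4 : ℝ)) :=
    fun j => aff_nonneg _ _
  have haffJ : ∀ j ∈ J, aff (marg p (B j)) (biased (1/4 : ℝ)) ≤ 1 - ε^2/2 := by
    intro j hj
    exact aff_le_of_tv_ge (hqjdist j) (hbdist j) hε0 hε1 (htype1 j hj)
  -- bound the product
  have hε2 : (0:ℝ) ≤ 1 - ε^2/2 := by nlinarith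
  have hprod : ∏ j, aff (marg p (B j)) (biased (1/4 : ℝ)) ≤ (1 - ε^2/2)^(J.card) := by
    have h1 : ∏ j ∈ J, aff (marg p (B j)) (biased (1/4 : ℝ)) ≤ (1 - ε^2/2)^(J.card) := by
      rw [← Finset.prod_const]
      exact Finset.prod_le_prod (fun j _ => haffj_nonneg j) (fun j hj => haffJ j hj)
    have h2 : ∏ j ∈ Jᶜ, aff (marg p (B j)) (biased (1/4 : ℝ)) ≤ 1 :=
      Finset.prod_le_one (fun j _ => haffj_nonneg j) (fun j _ => haffj_le_one j)
    calc ∏ j, aff (marg p (B j)) (biased (1/4 : ℝ))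
        = (∏ j ∈ J, aff (marg p (B j)) (biased (1/4 : ℝ))) *
            ∏ j ∈ Jᶜ, aff (marg p (B j)) (biased (1/4 : ℝ)) :=
          (Finset.prod_mul_prod_compl J _).symm
      _ ≤ (1 - ε^2/2)^(J.card) * 1 := by
          apply mul_le_mul h1 h2
            (Finset.prod_nonneg fun j _ => haffj_nonneg j) (by positivity)
      _ = (1 - ε^2/2)^(J.card) := mul_one _
  have hfinal : (1 - ε^2/2)^(J.card) ≤ Real.exp (-(r : ℝ) / 2 ^ (12 * t)) := by
    have hu0 : (0:ℝ) ≤ ε^2/2 := by positivity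
    have h1 : (1 - ε^2/2)^(J.card) ≤ Real.exp (-(ε^2/2))^(J.card) := by
      apply pow_le_pow_left₀ hε2
      have := Real.add_one_le_exp (-(ε^2/2))
      linarith
    have h2 : Real.exp (-(ε^2/2))^(J.card) = Real.exp (-((J.card : ℝ) * (ε^2/2))) := by
      rw [← Real.exp_nat_mul]
      ring_nf
    have hsq : ε^2 = (1/2:ℝ)^(10*t) := by
      rw [hε, ← pow_mul]
      congr 1
      ring
    have h3 : (r:ℝ)/2^(12*t) ≤ (J.card : ℝ) * (ε^2/2) := by
      have hkr : (r:ℝ) ≤ 2 * (J.card : ℝ) := by exact_mod_cast hJ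
      have hεe : ε^2/2 = (1/2:ℝ)^(10*t+1) := by
        rw [hsq, pow_succ]
        ring
      have hmono : ((1/2:ℝ))^(12*t) ≤ (1/2)^(10*t+2) :=
        pow_le_pow_of_le_one (by norm_num) (by norm_num) (by omega)
      have hdiv : (r:ℝ)/2^(12*t) = (r:ℝ) * (1/2)^(12*t) := by
        rw [div_eq_mul_inv, ← inv_pow]
        norm_num
      rw [hdiv, hεe]
      have hr0 : (0:ℝ) ≤ (r:ℝ) := Nat.cast_nonneg r
      calc (r:ℝ) * (1/2)^(12*t) ≤ (r:ℝ) * (1/2)^(10*t+2) :=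
            mul_le_mul_of_nonneg_left hmono hr0
        _ = ((r:ℝ)/2) * (1/2)^(10*t+1) := by rw [pow_succ]; ring
        _ ≤ (J.card : ℝ) * (1/2)^(10*t+1) := by
            apply mul_le_mul_of_nonneg_right (by linarith) (by positivity)
    calc (1 - ε^2/2)^(J.card) ≤ Real.exp (-((J.card : ℝ) * (ε^2/2))) := h1.trans_eq h2
      _ ≤ Real.exp (-(r : ℝ) / 2 ^ (12 * t)) := by
          apply Real.exp_le_exp.mpr
          rw [neg_div]
          linarith
  -- assemble
  have hchain : 1 - Real.exp (-(r : ℝ) / 2 ^ (12 * t)) ≤ tv p (dHard' n m) := by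
    have h1 := one_sub_tv_le_aff hP'dist hQ'dist
    have h2 := tv_push_le Φ p (dHard' n m)
    rw [haff] at h1
    have := hprod.trans hfinal
    linarith
  have hexp : 0 < Real.exp (-(r : ℝ) / 2 ^ (12 * t)) := Real.exp_pos _
  linarith
end

section
/- Let A be an integer-valued random variable and let η ≥ 0 satisfy max_{a ∈ {0,1,2,3}} Pr[A ≡ a (mod 4)] ≤ 1 − η. Then |E[𝗂^A]| ≤ 1 − η/4, where 𝗂 is the imaginary unit and the expectation is taken in the complex numbers. -/
/-
Writing `p r` for the mass of the residue class `r` mod 4, `E[𝗂^A] = (p 0 - p 2) + (p 1 - p 3) 𝗂`.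
Since `(p r - p (r + 2))² ≤ max (p r) (p (r + 2)) * (p r + p (r + 2)) ≤ (1 - η) * (p r + p (r + 2))`,
summing gives `|E[𝗂^A]|² ≤ 1 - η ≤ (1 - η / 4)²`.
-/

open Finset

noncomputable def residueMass {α : Type*} [Fintype α] (μ : α → ℝ) (A : α → ℤ) (n r : ℤ) : ℝ :=
  ∑ ω, if A ω % n = r then μ ω else 0

section ResidueMass

variable {α : Type*} [Fintype α] (μ : α → ℝ) (A : α → ℤ) {n : ℤ}

theorem residueMass_nonneg (hμ : ∀ ω, 0 ≤ μ ω) (r : ℤ) : 0 ≤ residueMass μ A n r :=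
  sum_nonneg fun ω _ => by split_ifs <;> simp [hμ ω]

theorem sum_smul_emod_eq_sum_residueMass_smul {M : Type*} [AddCommMonoid M] [Module ℝ M]
    (hn : 0 < n) (f : ℤ → M) :
    ∑ ω, μ ω • f (A ω % n) = ∑ r ∈ Ico 0 n, residueMass μ A n r • f r := by
  have hmem : ∀ ω, A ω % n ∈ Ico 0 n := fun ω =>
    mem_Ico.2 ⟨Int.emod_nonneg _ hn.ne', Int.emod_lt_of_pos _ hn⟩
  simp only [residueMass, sum_smul, ite_smul, zero_smul]
  rw [sum_comm]
  refine sum_congr rfl fun ω _ => ?_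
  rw [sum_ite_eq_of_mem _ _ _ (hmem ω)]

theorem sum_residueMass (hn : 0 < n) :
    ∑ r ∈ Ico 0 n, residueMass μ A n r = ∑ ω, μ ω := by
  simpa using (sum_smul_emod_eq_sum_residueMass_smul μ A hn fun _ => (1 : ℝ)).symm

end ResidueMass

theorem sum_Ico_zero_four {M : Type*} [AddCommMonoid M] (f : ℤ → M) :
    ∑ r ∈ Ico 0 4, f r = f 0 + f 1 + f 2 + f 3 := by
  rw [show Ico (0 : ℤ) 4 = {0, 1, 2, 3} from rfl]
  simp [add_assoc]

theorem sq_sub_le_mul_add {a c M : ℝ} (ha : 0 ≤ a) (hc : 0 ≤ c) (haM : a ≤ M) (hcM : c ≤ M) :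
    (a - c) ^ 2 ≤ M * (a + c) := by
  nlinarith [mul_nonneg ha hc]

theorem sq_sub_add_sq_sub_le {a b c d M : ℝ} (ha : 0 ≤ a) (hb : 0 ≤ b) (hc : 0 ≤ c) (hd : 0 ≤ d)
    (haM : a ≤ M) (hbM : b ≤ M) (hcM : c ≤ M) (hdM : d ≤ M) :
    (a - c) ^ 2 + (b - d) ^ 2 ≤ M * (a + b + c + d) := by
  linarith [sq_sub_le_mul_add ha hc haM hcM, sq_sub_le_mul_add hb hd hbM hdM]

theorem norm_sum_mul_I_zpow_sq {α : Type*} [Fintype α] (μ : α → ℝ) (A : α → ℤ) :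
    ‖∑ ω, (μ ω : ℂ) * Complex.I ^ (A ω)‖ ^ 2 =
      (residueMass μ A 4 0 - residueMass μ A 4 2) ^ 2 +
        (residueMass μ A 4 1 - residueMass μ A 4 3) ^ 2 := by
  have hsum : ∑ ω, (μ ω : ℂ) * Complex.I ^ (A ω) =
      ((residueMass μ A 4 0 - residueMass μ A 4 2 : ℝ) : ℂ) +
        ((residueMass μ A 4 1 - residueMass μ A 4 3 : ℝ) : ℂ) * Complex.I :=
    calc ∑ ω, (μ ω : ℂ) * Complex.I ^ (A ω)
        = ∑ ω, μ ω • Complex.I ^ (A ω % 4) := by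
          simp only [Complex.real_smul, ← Complex.I_zpow_eq_zpow_mod]
      _ = ∑ r ∈ Ico 0 4, residueMass μ A 4 r • Complex.I ^ r :=
          sum_smul_emod_eq_sum_residueMass_smul μ A (by norm_num) _
      _ = _ := by
          rw [sum_Ico_zero_four]
          simp only [zpow_ofNat, pow_zero, pow_one, Complex.I_sq, Complex.I_pow_three,
            Complex.real_smul]
          push_cast
          ring
  rw [hsum, Complex.sq_norm, Complex.normSq_add_mul_I]

theorem stmt10 {α : Type*} [Fintype α] (μ : α → ℝ) (hμ : IsDist μ)
    (A : α → ℤ) (η : ℝ) (hη : 0 ≤ η)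
    (hmax : ∀ a : ℤ, (∑ ω, if A ω % 4 = a % 4 then μ ω else 0) ≤ 1 - η) :
    ‖∑ ω, (μ ω : ℂ) * Complex.I ^ (A ω)‖ ≤ 1 - η / 4 := by
  obtain ⟨hμ0, hμ1⟩ := hμ
  set p := residueMass μ A 4
  have hp0 : ∀ r, 0 ≤ p r := residueMass_nonneg μ A hμ0
  have hp : ∀ r ∈ Ico 0 4, p r ≤ 1 - η := fun r hr =>
    Int.emod_eq_of_lt (mem_Ico.1 hr).1 (mem_Ico.1 hr).2 ▸ hmax r
  have htotal : p 0 + p 1 + p 2 + p 3 = 1 := by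
    rw [← hμ1, ← sum_residueMass μ A (by norm_num : (0 : ℤ) < 4), sum_Ico_zero_four]
  have hsq : ‖∑ ω, (μ ω : ℂ) * Complex.I ^ (A ω)‖ ^ 2 ≤ 1 - η :=
    calc _ = (p 0 - p 2) ^ 2 + (p 1 - p 3) ^ 2 := norm_sum_mul_I_zpow_sq μ A
      _ ≤ (1 - η) * (p 0 + p 1 + p 2 + p 3) :=
          sq_sub_add_sq_sub_le (hp0 0) (hp0 1) (hp0 2) (hp0 3)
            (hp 0 (by decide)) (hp 1 (by decide)) (hp 2 (by decide)) (hp 3 (by decide))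
      _ = 1 - η := by rw [htotal, mul_one]
  have hη1 : η ≤ 1 := by linarith [sq_nonneg ‖∑ ω, (μ ω : ℂ) * Complex.I ^ (A ω)‖]
  refine (pow_le_pow_iff_left₀ (norm_nonneg _) (by linarith) two_ne_zero).1 ?_
  nlinarith
end

section
/- Let n, m ≥ 1 be integers with m ≥ n(n+1)/2. Then there exist an integer M ≥ 0 and a 6-local function f : {0,1}^M → {0,1}^{n+m} such that f applied to the uniform distribution on {0,1}^M is distributed exactly as D_hard(n,m). -/
open Finset

/-!
Write `x i = a (i, false) && a (i, true)` with `a` uniform, so that `x` is `1/4`-biased. For the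
last `m` bits take uniform bits `s` and `u : Fin m → Bool` and put
`y k = u k ⊕ u (k + 1) ⊕ c k` (indices mod `m`), where the `c k` are the monomials `x i x j`
(`i < j`) and `x i s`, placed on distinct coordinates by an embedding `Sym2 (Fin n) ↪ Fin m`, and
`c k = 0` elsewhere. A monomial reads at most four input bits, so every output bit reads at most
six.

The cyclic differences of a uniform `u` are uniform on the even-weight vectors, so given `x` and `s`
the vector `y` is uniform among the vectors of parity `∑ c = C(|x| + s, 2) ≡ ⌊(|x| + s) / 2⌋`.
For odd `|x|` the two values of `s` give the two parities, so `y` is uniform; for even `|x|` both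
give `|x| / 2 mod 2`.
-/

section Push

variable {α β : Type*} [Fintype α] [DecidableEq β]

lemma push_const_apply (f : α → β) (c : ℝ) (b : β) :
    push f (fun _ => c) b = c * #{a | f a = b} := by
  rw [push, ← sum_filter, sum_const, nsmul_eq_mul, mul_comm]

lemma push_comp_equiv_s11 {α' : Type*} [Fintype α'] (e : α' ≃ α) (f : α → β) (c : ℝ) :
    push (f ∘ e) (fun _ => c) = push f (fun _ => c) :=
  funext fun b => e.sum_comp fun a => if f a = b then c else 0

end Push

lemma IsLocal.comp_arrow {κ κ' ι : Type*} [DecidableEq κ'] {d : ℕ} {f : (κ → Bool) → ι → Bool}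
    (hf : IsLocal d f) (σ : κ → κ') : IsLocal d fun w => f (w ∘ σ) := by
  intro i
  obtain ⟨T, hT, hdep⟩ := hf i
  exact ⟨T.image σ, card_image_le.trans hT,
    fun x y h => hdep _ _ fun j hj => h _ (mem_image_of_mem σ hj)⟩

lemma exists_fin_isLocal_push_eq {κ ι : Type*} [Fintype κ] [DecidableEq κ] [Fintype ι]
    {d : ℕ} {F : (κ → Bool) → ι → Bool} (hF : IsLocal d F) :
    ∃ (M : ℕ) (f : (Fin M → Bool) → ι → Bool), IsLocal d f ∧
      push f (fun _ => (1 / 2 : ℝ) ^ M) = push F (fun _ => (1 / 2 : ℝ) ^ Fintype.card κ) :=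
  let e := Fintype.equivFin κ
  ⟨_, fun w => F (w ∘ e), hF.comp_arrow e,
    push_comp_equiv_s11 (e.symm.arrowCongr (Equiv.refl Bool)) F _⟩

lemma card_filter_sum_arrow {α β γ : Type*} [Fintype α] [Fintype β] [Fintype γ] [DecidableEq α]
    [DecidableEq β] (P : (α → γ) → Prop) (Q : (β → γ) → Prop) [DecidablePred P]
    [DecidablePred Q] :
    #{w : α ⊕ β → γ | P (w ∘ Sum.inl) ∧ Q (w ∘ Sum.inr)} = #{a | P a} * #{b | Q b} := by
  rw [← card_product, ← filter_product]
  exact card_equiv (Equiv.sumArrowEquivProdArrow α β γ) fun w => by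
    simp only [mem_filter, mem_univ, true_and, mem_product]
    rfl

lemma card_filter_option_arrow {α β : Type*} [Fintype α] [Fintype β] [DecidableEq α]
    (P : β → (α → β) → Prop) [∀ b, DecidablePred (P b)] :
    #{v : Option α → β | P (v none) (v ∘ some)} = ∑ b, #{u | P b u} := by
  rw [card_equiv Equiv.piOptionEquivProd (t := {p | P p.1 p.2}) fun v => by
    simp [Function.comp_def], card_filter, Fintype.sum_prod_type]
  simp only [card_filter]

lemma Fin.append_eq_append_iff {α : Type*} {n m : ℕ} {a c : Fin n → α} {b d : Fin m → α} :
    Fin.append a b = Fin.append c d ↔ a = c ∧ b = d := by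
  refine ⟨fun h => ⟨funext fun i => ?_, funext fun j => ?_⟩, fun h => h.1 ▸ h.2 ▸ rfl⟩
  · simpa using congrFun h (Fin.castAdd m i)
  · simpa using congrFun h (Fin.natAdd n j)

section AndPairs

variable {ι : Type*} [Fintype ι] [DecidableEq ι]

def andPairs (a : ι × Bool → Bool) (i : ι) : Bool := a (i, false) && a (i, true)

lemma card_andPairs_fiber (x : ι → Bool) :
    #{a | andPairs a = x} = ∏ i, if x i then 1 else 3 := by
  have hbit : ∀ b : Bool, #{c : Bool → Bool | (c false && c true) = b} = if b then 1 else 3 := by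
    decide
  rw [card_equiv (Equiv.curry ι Bool Bool)
    (t := Fintype.piFinset fun i => {c : Bool → Bool | (c false && c true) = x i}) fun a => by
      simp [andPairs, funext_iff, Fintype.mem_piFinset], Fintype.card_piFinset]
  exact prod_congr rfl fun i _ => hbit (x i)

lemma biased_quarter_eq_card_andPairs_fiber (x : ι → Bool) :
    biased (1 / 4) x = (1 / 2 : ℝ) ^ Fintype.card (ι × Bool) * #{a | andPairs a = x} := by
  rw [card_andPairs_fiber, Fintype.card_prod, Fintype.card_bool, pow_mul', ← card_univ,
    ← prod_const, Nat.cast_prod, ← prod_mul_distrib, biased]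
  refine prod_congr rfl fun i _ => ?_
  split <;> norm_num

end AndPairs

section Parity

variable {ι : Type*} [Fintype ι]

def boolEquivZModTwo : Bool ≃ ZMod 2 where
  toFun b := if b then 1 else 0
  invFun z := decide (z = 1)
  left_inv b := by cases b <;> rfl
  right_inv z := by fin_cases z <;> rfl

lemma boolEquivZModTwo_xor (a b : Bool) :
    boolEquivZModTwo (xor a b) = boolEquivZModTwo a + boolEquivZModTwo b := by
  cases a <;> cases b <;> rfl

lemma natCast_hw_s11 (v : ι → Bool) : (hw v : ZMod 2) = ∑ k, boolEquivZModTwo (v k) := by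
  rw [hw, natCast_card_filter]
  rfl

lemma hw_xor_mod_two (a b : ι → Bool) :
    hw (fun k => xor (a k) (b k)) % 2 = (hw a + hw b) % 2 := by
  rw [← ZMod.natCast_eq_natCast_iff', Nat.cast_add, natCast_hw_s11, natCast_hw_s11, natCast_hw_s11,
    ← sum_add_distrib]
  simp only [boolEquivZModTwo_xor]

end Parity

section CyclicDifferences

variable {m : ℕ}

lemma finRotate_castSucc (j : Fin m) : finRotate (m + 1) j.castSucc = j.succ := by
  simp [Fin.coeSucc_eq_succ]

lemma Fin.partialSum_last {M : Type*} [AddCommMonoid M] (V : Fin m → M) :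
    Fin.partialSum V (Fin.last m) = ∑ k, V k := by
  simp [Fin.partialSum, List.take_of_length_le, Fin.sum_ofFn]

lemma sum_eq_zero_of_cyclic_add {V U : Fin m → ZMod 2}
    (hU : ∀ k, U (finRotate m k) = U k + V k) : ∑ k, V k = 0 := by
  have hV : ∀ k, V k = U (finRotate m k) - U k := fun k => by rw [hU]; ring
  simp only [hV, sum_sub_distrib, Equiv.sum_comp, sub_self]

lemma cyclic_add_partialSum_castSucc (V : Fin (m + 1) → ZMod 2) (hV : ∑ k, V k = 0) (c : ZMod 2)
    (k : Fin (m + 1)) :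
    c + Fin.partialSum V (finRotate _ k).castSucc = (c + Fin.partialSum V k.castSucc) + V k := by
  rcases Fin.eq_castSucc_or_eq_last k with ⟨j, rfl⟩ | rfl
  · rw [finRotate_castSucc, ← Fin.succ_castSucc, Fin.partialSum_succ, add_assoc]
  · rw [finRotate_last, add_assoc, ← Fin.partialSum_succ, Fin.succ_last, Fin.partialSum_last, hV,
      Fin.castSucc_zero, Fin.partialSum_zero]

lemma eq_partialSum_of_cyclic_add {V U : Fin (m + 1) → ZMod 2}
    (hU : ∀ k, U (finRotate _ k) = U k + V k) (i : Fin (m + 1)) :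
    U i = U 0 + Fin.partialSum V i.castSucc := by
  induction i using Fin.induction with
  | zero => simp
  | succ j ih =>
    rw [← finRotate_castSucc, hU, ih, finRotate_castSucc, ← Fin.succ_castSucc,
      Fin.partialSum_succ, add_assoc]

lemma card_cyclic_add (V : Fin (m + 1) → ZMod 2) :
    #{U : Fin (m + 1) → ZMod 2 | ∀ k, U (finRotate _ k) = U k + V k}
      = if ∑ k, V k = 0 then 2 else 0 := by
  split_ifs with hV
  · have hsol : ({U | ∀ k, U (finRotate _ k) = U k + V k} : Finset (Fin (m + 1) → ZMod 2))
        = univ.image fun (c : ZMod 2) (i : Fin (m + 1)) => c + Fin.partialSum V i.castSucc := by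
      ext U
      simp only [mem_filter, mem_univ, true_and, mem_image]
      constructor
      · exact fun hU => ⟨U 0, funext fun i => (eq_partialSum_of_cyclic_add hU i).symm⟩
      · rintro ⟨c, rfl⟩
        exact cyclic_add_partialSum_castSucc V hV c
    rw [hsol, card_image_of_injective _ fun c c' h => by simpa using congrFun h 0, card_univ,
      ZMod.card]
  · rw [card_eq_zero, filter_eq_empty_iff]
    exact fun U _ hU => hV (sum_eq_zero_of_cyclic_add hU)

def cycleDiff (u : Fin m → Bool) (k : Fin m) : Bool := xor (u k) (u (finRotate m k))

lemma card_cycleDiff_eq (hm : 0 < m) (v : Fin m → Bool) :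
    #{u | cycleDiff u = v} = if hw v % 2 = 0 then 2 else 0 := by
  obtain ⟨m, rfl⟩ := Nat.exists_eq_add_one_of_ne_zero hm.ne'
  have hxor : ∀ a b c : Bool, xor a b = c ↔
      boolEquivZModTwo b = boolEquivZModTwo a + boolEquivZModTwo c := by decide
  rw [card_equiv (Equiv.arrowCongr (Equiv.refl _) boolEquivZModTwo)
    (t := {U | ∀ k, U (finRotate _ k) = U k + boolEquivZModTwo (v k)}) fun u => by
      simp [cycleDiff, funext_iff, hxor], card_cyclic_add]
  simp only [← natCast_hw_s11, ZMod.natCast_eq_zero_iff_even, Nat.even_iff]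

/-- Every even-weight vector has exactly two preimages under `cycleDiff`, so there are
`2 ^ m / 2` of them. -/
lemma card_hw_mod_two_eq (hm : 0 < m) {b : ℕ} (hb : b < 2) :
    #{z : Fin m → Bool | hw z % 2 = b} = 2 ^ (m - 1) := by
  have heven : 2 * #{z : Fin m → Bool | hw z % 2 = 0} = 2 ^ m := by
    calc 2 * #{z : Fin m → Bool | hw z % 2 = 0}
        = ∑ v : Fin m → Bool, if hw v % 2 = 0 then 2 else 0 := by
          rw [sum_ite, sum_const_zero, sum_const, smul_eq_mul, add_zero, mul_comm]
      _ = #(univ : Finset (Fin m → Bool)) := by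
          simp only [← card_cycleDiff_eq hm]
          exact (card_eq_sum_card_fiberwise fun _ _ => mem_univ _).symm
      _ = 2 ^ m := by simp
  have htotal := card_filter_add_card_filter_not (s := (univ : Finset (Fin m → Bool)))
    fun z => hw z % 2 = 0
  rw [filter_congr fun z _ => show ¬hw z % 2 = 0 ↔ hw z % 2 = 1 by omega] at htotal
  simp only [card_univ, Fintype.card_fun, Fintype.card_bool, Fintype.card_fin] at htotal
  obtain ⟨m, rfl⟩ := Nat.exists_eq_add_one_of_ne_zero hm.ne'
  rw [pow_succ] at heven htotal
  rw [Nat.add_sub_cancel]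
  interval_cases b <;> omega

end CyclicDifferences

section PairMonomials

variable {α : Type*} [DecidableEq α]

def pairMonomial (x : α → Bool) (s : Bool) : Sym2 α → Bool :=
  Sym2.lift ⟨fun i j => x i && x j && (s || i != j), fun i j => by
    dsimp only
    rw [Bool.and_comm (x i), bne_comm]⟩

@[simp] lemma pairMonomial_mk (x : α → Bool) (s : Bool) (i j : α) :
    pairMonomial x s s(i, j) = (x i && x j && (s || i != j)) := rfl

lemma card_pairMonomial [Fintype α] (x : α → Bool) (s : Bool) :
    #{q | pairMonomial x s q} = (hw x + s.toNat).choose 2 := by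
  set S : Finset α := {i | x i = true}
  cases s
  · have h : ({q | pairMonomial x false q} : Finset (Sym2 α))
        = S.offDiag.image Sym2.mk.uncurry := by
      ext q
      induction q using Sym2.ind with
      | _ i j =>
        simp only [mem_filter, mem_univ, pairMonomial_mk, Bool.false_or, Bool.and_eq_true,
          bne_iff_ne, ne_eq, true_and, mem_image, mem_offDiag, Prod.exists,
          Function.uncurry_apply_pair, Sym2.eq, Sym2.rel_iff', Prod.mk.injEq, Prod.swap_prod_mk, S]
        grind
    rw [h, Sym2.card_image_offDiag]
    rfl
  · have h : ({q | pairMonomial x true q} : Finset (Sym2 α)) = S.sym2 := by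
      ext q
      induction q using Sym2.ind with
      | _ i j => simp [S]
    rw [h, card_sym2]
    rfl

end PairMonomials

lemma Nat.choose_two_mod_two (k : ℕ) : k.choose 2 % 2 = k / 2 % 2 := by
  induction k using Nat.twoStepInduction with
  | zero => rfl
  | one => rfl
  | more k ih _ =>
    have h : (k + 2).choose 2 = k.choose 2 + 2 * k + 1 := by
      simp only [Nat.choose_succ_succ', Nat.choose_zero_right, zero_add, Nat.choose_one_right,
        Nat.reduceAdd]
      ring
    rw [h, Nat.add_div_right k two_pos]
    omega

lemma hw_extend_false {α ι : Type*} [Fintype α] [Fintype ι] (e : α ↪ ι) (g : α → Bool) :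
    hw (Function.extend e g fun _ => false) = #{a | g a} := by
  classical
  rw [hw, ← card_map e]
  congr 1
  ext k
  by_cases hk : ∃ a, e a = k
  · obtain ⟨a, rfl⟩ := hk
    simp [e.injective.extend_apply]
  · simp only [mem_filter, mem_univ, true_and, mem_map, Function.extend_apply' _ _ _ hk]
    grind
section Sampler

variable {α : Type*} [DecidableEq α] {n m : ℕ}

noncomputable def paritySampler (e : Sym2 α ↪ Fin m) (x : α → Bool) (v : Option (Fin m) → Bool)
    (k : Fin m) : Bool :=
  xor (cycleDiff (v ∘ some) k) (Function.extend e (pairMonomial x (v none)) (fun _ => false) k)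

noncomputable def hardSampler (e : Sym2 (Fin n) ↪ Fin m)
    (w : (Fin n × Bool) ⊕ Option (Fin m) → Bool) : Fin (n + m) → Bool :=
  Fin.append (andPairs (w ∘ Sum.inl)) (paritySampler e (andPairs (w ∘ Sum.inl)) (w ∘ Sum.inr))

lemma exists_dependsOn_extend_pairMonomial (e : Sym2 α ↪ Fin m) (k : Fin m) :
    ∃ T : Finset ((α × Bool) ⊕ Option (Fin m)), #T ≤ 4 ∧
      DependsOn (fun w : (α × Bool) ⊕ Option (Fin m) → Bool => Function.extend e
        (pairMonomial (andPairs (w ∘ Sum.inl)) (w (Sum.inr none))) (fun _ => false) k) T := by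
  by_cases hk : ∃ q, e q = k
  · obtain ⟨q, rfl⟩ := hk
    induction q using Sym2.ind with
    | _ i j =>
    simp only [e.injective.extend_apply, pairMonomial_mk, andPairs, Function.comp_apply]
    by_cases hij : i = j
    · subst hij
      refine ⟨{.inl (i, false), .inl (i, true), .inr none}, card_le_three.trans (by norm_num),
        fun w w' h => ?_⟩
      simp only [coe_insert, coe_singleton, Set.mem_insert_iff, Set.mem_singleton_iff] at h
      simp [h]
    · refine ⟨{.inl (i, false), .inl (i, true), .inl (j, false), .inl (j, true)}, card_le_four,
        fun w w' h => ?_⟩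
      simp only [coe_insert, coe_singleton, Set.mem_insert_iff, Set.mem_singleton_iff] at h
      simp [h, bne_iff_ne.mpr hij]
  · refine ⟨∅, by simp, fun w w' _ => ?_⟩
    simp only [Function.extend_apply' _ _ _ hk]

lemma isLocal_hardSampler (e : Sym2 (Fin n) ↪ Fin m) : IsLocal 6 (hardSampler e) := by
  refine Fin.addCases (fun i => ?_) (fun k => ?_)
  · refine ⟨({.inl (i, false), .inl (i, true)} : Finset ((Fin n × Bool) ⊕ Option (Fin m))),
      card_le_two.trans (by norm_num), fun w w' h => ?_⟩
    simp [hardSampler, andPairs, h]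
  · obtain ⟨T, hT, hdep⟩ := exists_dependsOn_extend_pairMonomial e k
    refine ⟨{.inr (some k), .inr (some (finRotate m k))} ∪ T,
      (card_union_le _ _).trans (add_le_add card_le_two hT), fun w w' h => ?_⟩
    simp only [hardSampler, Fin.append_right, paritySampler, cycleDiff, Function.comp_apply]
    rw [h _ (by simp), h _ (by simp)]
    exact congrArg _ (hdep fun j hj => h j (mem_union_right _ hj))

variable [Fintype α]

lemma card_paritySampler_fiber (hm : 0 < m) (e : Sym2 α ↪ Fin m) (x : α → Bool)
    (y : Fin m → Bool) :
    #{v | paritySampler e x v = y}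
      = ∑ s : Bool, if (hw y + (hw x + s.toNat) / 2) % 2 = 0 then 2 else 0 := by
  have hxor : ∀ a b c : Bool, xor a c = b ↔ a = xor b c := by decide
  simp only [paritySampler, funext_iff, hxor]
  rw [card_filter_option_arrow (fun s u => ∀ k, cycleDiff u k =
    xor (y k) (Function.extend e (pairMonomial x s) (fun _ => false) k))]
  refine sum_congr rfl fun s _ => ?_
  have hpar : hw (fun k => xor (y k) (Function.extend e (pairMonomial x s) (fun _ => false) k)) % 2
      = (hw y + (hw x + s.toNat) / 2) % 2 := by
    rw [hw_xor_mod_two, hw_extend_false, card_pairMonomial, Nat.add_mod, Nat.choose_two_mod_two,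
      ← Nat.add_mod]
  simp only [← funext_iff, card_cycleDiff_eq hm, hpar]

lemma half_pow_mul_card_paritySampler_fiber (hm : 0 < m) (e : Sym2 α ↪ Fin m) (x : α → Bool)
    (y : Fin m → Bool) :
    (1 / 2 : ℝ) ^ Fintype.card (Option (Fin m)) * #{v | paritySampler e x v = y}
      = if hw x % 2 = 1 then (1 / 2) ^ m else unifParity (Fin m) (hw x / 2 % 2) y := by
  rw [card_paritySampler_fiber hm, unifParity, card_hw_mod_two_eq hm (Nat.mod_lt _ two_pos),
    Fintype.card_option, Fintype.card_fin, Fintype.sum_bool]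
  obtain ⟨m, rfl⟩ := Nat.exists_eq_add_one_of_ne_zero hm.ne'
  simp only [Bool.toNat_true, Bool.toNat_false, add_zero, Nat.add_sub_cancel]
  split_ifs <;> first | omega | (push_cast; simp only [one_div, inv_pow]; field_simp; ring)

lemma push_hardSampler (hm : 0 < m) (e : Sym2 (Fin n) ↪ Fin m) :
    push (hardSampler e)
      (fun _ => (1 / 2 : ℝ) ^ Fintype.card ((Fin n × Bool) ⊕ Option (Fin m))) = dHard' n m := by
  funext z
  obtain ⟨x, y, rfl⟩ : ∃ x y, z = Fin.append x y := ⟨_, _, Fin.append_castAdd_natAdd.symm⟩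
  have hfiber : #{w | hardSampler e w = Fin.append x y}
      = #{a | andPairs a = x} * #{v | paritySampler e x v = y} := by
    rw [← card_filter_sum_arrow]
    refine congrArg card (filter_congr fun w _ => ?_)
    rw [hardSampler, Fin.append_eq_append_iff]
    exact and_congr_right fun h => by rw [h]
  rw [push_const_apply, hfiber, Fintype.card_sum, pow_add, Nat.cast_mul, mul_mul_mul_comm,
    ← biased_quarter_eq_card_andPairs_fiber, half_pow_mul_card_paritySampler_fiber hm]
  simp [dHard', dHard, splitFun]

end Sampler

theorem stmt11 (n m : ℕ) (hn : 1 ≤ n) (hm : n * (n + 1) / 2 ≤ m) :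
    ∃ (M : ℕ) (f : (Fin M → Bool) → Fin (n + m) → Bool),
      IsLocal 6 f ∧ push f (fun _ => (1 / 2 : ℝ) ^ M) = dHard' n m := by
  have hcard : Fintype.card (Sym2 (Fin n)) ≤ Fintype.card (Fin m) := by
    rwa [Sym2.card, Fintype.card_fin, Fintype.card_fin, Nat.choose_two_right, Nat.add_sub_cancel,
      mul_comm]
  obtain ⟨e⟩ := Function.Embedding.nonempty_of_card_le hcard
  have hm : 0 < m := (e (Sym2.diag ⟨0, hn⟩)).pos
  obtain ⟨M, f, hf, hpush⟩ := exists_fin_isLocal_push_eq (isLocal_hardSampler e)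
  exact ⟨M, f, hf, hpush.trans (push_hardSampler hm e)⟩
end

section
/- Let n, m ≥ 1 be integers with m ≥ n − 1. Then there exist an integer M ≥ 0 and a 6-local function f : {0,1}^M → {0,1}^{n+m} such that f applied to the uniform distribution on {0,1}^M is distributed exactly as D*_hard(n,m). -/
open Finset

noncomputable def dHardStar (n m : ℕ) (p : (Fin n → Bool) × (Fin m → Bool)) : ℝ :=
  (1 / 2 : ℝ) ^ n *
    (if hw p.1 % 2 = 1 then (1 / 2 : ℝ) ^ m
     else unifParity (Fin m) ((hw p.1 / 2) % 2) p.2)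

noncomputable def dHardStar' (n m : ℕ) (z : Fin (n + m) → Bool) : ℝ :=
  dHardStar n m (splitFun n m z)

namespace St12

def pxor (v : ℕ → Bool) : ℕ → Bool
  | 0 => false
  | k+1 => xor (pxor v k) (v k)

def cnt (v : ℕ → Bool) : ℕ → ℕ
  | 0 => 0
  | k+1 => cnt v k + (if v k then 1 else 0)

def extF {m : ℕ} (v : Fin m → Bool) (k : ℕ) : Bool :=
  if h : k < m then v ⟨k, h⟩ else false

lemma pxor_congr {v w : ℕ → Bool} : ∀ k, (∀ i, i < k → v i = w i) → pxor v k = pxor w k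
  | 0, _ => rfl
  | k+1, h => by
      simp only [pxor, pxor_congr k (fun i hi => h i (by omega)), h k (by omega)]

lemma pxor_xor (v w : ℕ → Bool) :
    ∀ k, pxor (fun i => xor (v i) (w i)) k = xor (pxor v k) (pxor w k)
  | 0 => rfl
  | k+1 => by
      simp only [pxor, pxor_xor v w k]
      cases pxor v k <;> cases pxor w k <;> cases v k <;> cases w k <;> rfl

lemma pxor_delta (a : ℕ) (Q : Bool) :
    ∀ k, pxor (fun i => if i = a then Q else false) k = if a < k then Q else false
  | 0 => by simp [pxor]
  | k+1 => by
      have ih := pxor_delta a Q k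
      simp only [pxor, ih]
      rcases lt_trichotomy a k with h | h | h
      · rw [if_pos h, if_neg (show ¬ k = a by omega), if_pos (show a < k + 1 by omega)]
        cases Q <;> rfl
      · subst h
        rw [if_neg (show ¬ a < a by omega), if_pos rfl, if_pos (show a < a + 1 by omega)]
        cases Q <;> rfl
      · rw [if_neg (show ¬ a < k by omega), if_neg (show ¬ k = a by omega),
          if_neg (show ¬ a < k + 1 by omega)]
        rfl

lemma pxor_shift (N : ℕ) (h : ℕ → Bool) (h0 : h 0 = false) :
    ∀ k, pxor (fun j => if j + 1 < N then h (j+1) else false) k = pxor h (min (k+1) N)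
  | 0 => by
      rcases Nat.eq_zero_or_pos N with hN | hN
      · subst hN; simp [pxor]
      · have e : min 1 N = 1 := by omega
        simp [pxor, e, h0]
  | k+1 => by
      have ih := pxor_shift N h h0 k
      simp only [pxor, ih]
      by_cases hk : k + 1 < N
      · have h1 : min (k+1) N = k+1 := by omega
        have h2 : min (k+1+1) N = k+2 := by omega
        rw [if_pos hk, h1, h2]
        rfl
      · have h1 : min (k+1) N = min (k+1+1) N := by omega
        rw [if_neg hk, h1]
        cases pxor h (min (k+1+1) N) <;> rfl

lemma parity_step (c : ℕ) (b : Bool) :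
    ((decide (c % 2 = 1) ^^ b) = decide ((c + (if b then 1 else 0)) % 2 = 1)) ∧
    ((decide ((c/2) % 2 = 1) ^^ (b && decide (c % 2 = 1)))
      = decide (((c + (if b then 1 else 0)) / 2) % 2 = 1)) := by
  cases b
  · simp
  · simp only [if_pos rfl, Bool.true_and]
    constructor
    · rcases Nat.mod_two_eq_zero_or_one c with h | h
      · have e : (c+1) % 2 = 1 := by omega
        simp [h, e]
      · have e : (c+1) % 2 = 0 := by omega
        simp [h, e]
    · rcases Nat.mod_two_eq_zero_or_one c with h | h
      · have e : (c+1)/2 = c/2 := by omega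
        simp [h, e]
      · have e : (c+1)/2 = c/2 + 1 := by omega
        rcases Nat.mod_two_eq_zero_or_one (c/2) with h' | h'
        · have e2 : (c/2+1) % 2 = 1 := by omega
          simp [h, h', e, e2]
        · have e2 : (c/2+1) % 2 = 0 := by omega
          simp [h, h', e, e2]

lemma pxor_parity (v : ℕ → Bool) : ∀ k, (pxor v k = decide (cnt v k % 2 = 1)) ∧
    (pxor (fun i => v i && pxor v i) k = decide ((cnt v k / 2) % 2 = 1))
  | 0 => by simp [pxor, cnt]
  | k+1 => by
      obtain ⟨h1, h2⟩ := pxor_parity v k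
      constructor
      · simp only [pxor, h1, cnt]
        exact (parity_step (cnt v k) (v k)).1
      · simp only [pxor, h1, h2, cnt]
        exact (parity_step (cnt v k) (v k)).2

lemma cnt_eq_sum (v : ℕ → Bool) : ∀ k, cnt v k = ∑ i ∈ Finset.range k, (if v i then 1 else 0)
  | 0 => by simp [cnt]
  | k+1 => by rw [Finset.sum_range_succ, ← cnt_eq_sum v k]; rfl

lemma cnt_hw {m : ℕ} (v : Fin m → Bool) : cnt (extF v) m = hw v := by
  rw [cnt_eq_sum, hw, Finset.card_filter]
  rw [← Fin.sum_univ_eq_sum_range (fun i => if extF v i then 1 else 0) m]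
  refine Finset.sum_congr rfl fun i _ => ?_
  simp [extF, i.isLt]


def xOf {n : ℕ} (c : Fin (n+1) → Bool) : Fin n → Bool :=
  fun i => xor (c i.castSucc) (c i.succ)

lemma extF_lt {m : ℕ} (v : Fin m → Bool) {k : ℕ} (h : k < m) : extF v k = v ⟨k, h⟩ := by
  simp [extF, h]

lemma pxor_last (v : ℕ → Bool) {k : ℕ} (hk : 0 < k) :
    pxor v k = xor (pxor v (k-1)) (v (k-1)) := by
  obtain ⟨k', rfl⟩ : ∃ k', k = k'+1 := ⟨k-1, by omega⟩
  simp [pxor]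

lemma c_pxor {n : ℕ} (c : Fin (n+1) → Bool) :
    ∀ k, k ≤ n → xor (extF c 0) (extF c k) = pxor (extF (xOf c)) k
  | 0, _ => by simp [pxor]
  | k+1, h => by
      have ih := c_pxor c k (by omega)
      have hx : extF (xOf c) k = xor (extF c k) (extF c (k+1)) := by
        rw [extF_lt (xOf c) (show k < n by omega), extF_lt c (show k < n + 1 by omega),
          extF_lt c (show k + 1 < n + 1 by omega)]
        rfl
      simp only [pxor, ← ih, hx]
      generalize extF c 0 = a
      generalize extF c k = b
      generalize extF c (k+1) = d
      cases a <;> cases b <;> cases d <;> rfl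

def cFrom {n : ℕ} (b : Bool) (x : Fin n → Bool) : Fin (n+1) → Bool :=
  fun k => xor b (pxor (extF x) k.val)

lemma xOf_cFrom {n : ℕ} (b : Bool) (x : Fin n → Bool) : xOf (cFrom b x) = x := by
  funext i
  have hx : extF x i.val = x i := by rw [extF_lt x i.isLt]
  simp only [xOf, cFrom, Fin.coe_castSucc, Fin.val_succ, pxor, hx]
  generalize pxor (extF x) i.val = p
  cases b <;> cases p <;> cases x i <;> rfl

lemma cFrom_zero {n : ℕ} (b : Bool) (x : Fin n → Bool) : cFrom b x 0 = b := by
  simp [cFrom, pxor]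

lemma c_unique {n : ℕ} (c : Fin (n+1) → Bool) : c = cFrom (c 0) (xOf c) := by
  funext k
  have h := c_pxor c k.val (by omega)
  have e0 : extF c 0 = c 0 := by simp [extF]
  have ek : extF c k.val = c k := by rw [extF_lt c k.isLt]
  rw [e0, ek] at h
  simp only [cFrom, ← h]
  cases c 0 <;> cases c k <;> rfl

lemma card_c {n : ℕ} (x : Fin n → Bool) :
    (Finset.univ.filter fun c : Fin (n+1) → Bool => xOf c = x).card = 2 := by
  have hset : (Finset.univ.filter fun c : Fin (n+1) → Bool => xOf c = x)
      = {cFrom false x, cFrom true x} := by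
    ext c
    simp only [Finset.mem_filter, Finset.mem_univ, true_and, Finset.mem_insert,
      Finset.mem_singleton]
    constructor
    · intro h
      have hc := c_unique c
      rw [h] at hc
      cases h0 : c 0
      · left; rw [hc, h0]
      · right; rw [hc, h0]
    · rintro (rfl | rfl) <;> exact xOf_cFrom _ x
  rw [hset, Finset.card_pair]
  intro h
  have := congrFun h 0
  rw [cFrom_zero, cFrom_zero] at this
  exact Bool.false_ne_true this

def cyc {m : ℕ} (j : Fin m) : Fin m := ⟨(j.val + 1) % m, Nat.mod_lt _ j.pos⟩

def sFrom {m : ℕ} (b : Bool) (v : Fin m → Bool) : Fin m → Bool :=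
  fun j => xor b (pxor (extF v) j.val)

lemma s_unique {m : ℕ} (hm : 0 < m) (s v : Fin m → Bool)
    (h : ∀ j, xor (s j) (s (cyc j)) = v j) : s = sFrom (s ⟨0, hm⟩) v := by
  funext k
  suffices H : ∀ (t : ℕ) (ht : t < m), s ⟨t, ht⟩ = xor (s ⟨0, hm⟩) (pxor (extF v) t) by
    have := H k.val k.isLt
    simpa [sFrom] using this
  intro t
  induction t with
  | zero => intro ht; simp [pxor]
  | succ t ih =>
      intro ht
      have ht' : t < m := by omega
      have hc := h ⟨t, ht'⟩
      have hcyc : cyc (⟨t, ht'⟩ : Fin m) = ⟨t+1, ht⟩ := by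
        simp [cyc, Nat.mod_eq_of_lt ht]
      rw [hcyc] at hc
      have hv : extF v t = v ⟨t, ht'⟩ := extF_lt v ht'
      have hstep : s ⟨t+1, ht⟩ = xor (s ⟨t, ht'⟩) (v ⟨t, ht'⟩) := by
        rw [← hc]
        generalize s (⟨t, ht'⟩ : Fin m) = a
        cases a <;> cases s (⟨t+1, ht⟩ : Fin m) <;> rfl
      rw [hstep, ih ht']
      simp only [pxor, hv]
      generalize s (⟨0, hm⟩ : Fin m) = a
      generalize pxor (extF v) t = p
      cases a <;> cases p <;> cases v ⟨t, ht'⟩ <;> rfl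

lemma sFrom_cycle {m : ℕ} (hm : 0 < m) (b : Bool) (v : Fin m → Bool)
    (hv : pxor (extF v) m = false) :
    ∀ j, xor (sFrom b v j) (sFrom b v (cyc j)) = v j := by
  intro j
  have hvj : extF v j.val = v j := by rw [extF_lt v j.isLt]
  by_cases hj : j.val + 1 < m
  · have hcyc : (cyc j).val = j.val + 1 := by simp [cyc, Nat.mod_eq_of_lt hj]
    simp only [sFrom, hcyc, pxor, hvj]
    generalize pxor (extF v) j.val = p
    cases b <;> cases p <;> cases v j <;> rfl
  · have hjm : j.val + 1 = m := by have := j.isLt; omega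
    have hcyc : (cyc j).val = 0 := by simp [cyc, hjm]
    simp only [sFrom, hcyc, pxor]
    have hpm : pxor (extF v) m = xor (pxor (extF v) j.val) (extF v j.val) := by
      rw [pxor_last (extF v) hm, show m - 1 = j.val by omega]
    rw [hpm, hvj] at hv
    revert hv
    generalize pxor (extF v) j.val = p
    cases b <;> cases p <;> cases v j <;> simp

lemma cycle_parity {m : ℕ} (hm : 0 < m) (s v : Fin m → Bool)
    (h : ∀ j, xor (s j) (s (cyc j)) = v j) : pxor (extF v) m = false := by
  have hs := s_unique hm s v h
  have hml : m - 1 < m := by omega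
  have h1 := h ⟨m-1, hml⟩
  have hjm : (m-1) + 1 = m := by omega
  have hcyc : cyc (⟨m-1, hml⟩ : Fin m) = ⟨0, hm⟩ := by
    apply Fin.ext
    simp [cyc, hjm, Nat.mod_self]
  rw [hs] at h1
  rw [hcyc] at h1
  simp only [sFrom, pxor] at h1
  have hvm : extF v (m-1) = v ⟨m-1, hml⟩ := extF_lt v hml
  rw [pxor_last (extF v) hm, hvm]
  revert h1
  generalize s (⟨0, hm⟩ : Fin m) = a
  generalize pxor (extF v) (m-1) = p
  cases a <;> cases p <;> cases v ⟨m-1, hml⟩ <;> simp [pxor]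

lemma sFrom_zero {m : ℕ} (hm : 0 < m) (b : Bool) (v : Fin m → Bool) :
    sFrom b v ⟨0, hm⟩ = b := by
  simp [sFrom, pxor]

lemma card_s {m : ℕ} (hm : 0 < m) (v : Fin m → Bool) :
    (Finset.univ.filter fun s : Fin m → Bool => ∀ j, xor (s j) (s (cyc j)) = v j).card
      = if pxor (extF v) m = false then 2 else 0 := by
  by_cases hv : pxor (extF v) m = false
  · rw [if_pos hv]
    have hset : (Finset.univ.filter fun s : Fin m → Bool => ∀ j, xor (s j) (s (cyc j)) = v j)
        = {sFrom false v, sFrom true v} := by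
      ext s
      simp only [Finset.mem_filter, Finset.mem_univ, true_and, Finset.mem_insert,
        Finset.mem_singleton]
      constructor
      · intro h
        have hs := s_unique hm s v h
        cases h0 : s ⟨0, hm⟩
        · left; rw [hs, h0]
        · right; rw [hs, h0]
      · rintro (rfl | rfl) <;> exact sFrom_cycle hm _ v hv
    rw [hset, Finset.card_pair]
    intro h
    have := congrFun h ⟨0, hm⟩
    rw [sFrom_zero, sFrom_zero] at this
    exact Bool.false_ne_true this
  · rw [if_neg hv]
    rw [Finset.card_eq_zero, Finset.filter_eq_empty_iff]
    intro s _
    exact fun h => hv (cycle_parity hm s v h)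

def tC {n m : ℕ} (c : Fin (n+1) → Bool) (u : Bool) (j : Fin m) : Bool :=
  xor (if j.val + 2 < n then
        (xor (extF c (j.val+1)) (extF c (j.val+2))) && (xor (extF c 0) (extF c (j.val+1)))
      else false)
      (if j.val + 1 = m then
        xor ((xor (extF c (n-1)) (extF c n)) && (xor (extF c 0) (extF c (n-1))))
            (u && (xor (extF c 0) (extF c n)))
      else false)

def pNx {n : ℕ} (x : Fin n → Bool) (i : ℕ) : Bool := extF x i && pxor (extF x) i

def tX {n m : ℕ} (x : Fin n → Bool) (u : Bool) (j : Fin m) : Bool :=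
  xor (if j.val + 2 < n then pNx x (j.val+1) else false)
      (if j.val + 1 = m then xor (pNx x (n-1)) (u && pxor (extF x) n) else false)

lemma tC_eq_tX {n m : ℕ} (hn : 1 ≤ n) (c : Fin (n+1) → Bool) (u : Bool) (j : Fin m) :
    tC c u j = tX (xOf c) u j := by
  have key : ∀ k, k ≤ n → xor (extF c 0) (extF c k) = pxor (extF (xOf c)) k := c_pxor c
  have hx : ∀ k, k < n → extF (xOf c) k = xor (extF c k) (extF c (k+1)) := by
    intro k hk
    rw [extF_lt (xOf c) hk, extF_lt c (show k < n + 1 by omega),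
      extF_lt c (show k + 1 < n + 1 by omega)]
    rfl
  unfold tC tX pNx
  congr 1
  · by_cases h1 : j.val + 2 < n
    · rw [if_pos h1, if_pos h1, hx (j.val+1) (by omega), key (j.val+1) (by omega)]
    · rw [if_neg h1, if_neg h1]
  · by_cases h2 : j.val + 1 = m
    · rw [if_pos h2, if_pos h2]
      have hxn : extF (xOf c) (n-1) = xor (extF c (n-1)) (extF c n) := by
        rw [hx (n-1) (by omega), show n - 1 + 1 = n by omega]
      rw [hxn, key (n-1) (by omega), key n le_rfl]
    · rw [if_neg h2, if_neg h2]

lemma pNx_zero {n : ℕ} (x : Fin n → Bool) : pNx x 0 = false := by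
  simp [pNx, pxor]

lemma pxor_tX {n m : ℕ} (hn : 1 ≤ n) (hm : 0 < m) (hnm : n - 1 ≤ m)
    (x : Fin n → Bool) (u : Bool) :
    pxor (extF (tX (m := m) x u)) m
      = xor (pxor (pNx x) n) (u && pxor (extF x) n) := by
  have e1 : ∀ i, i < m → extF (tX (m := m) x u) i
      = xor ((fun i => if i + 1 < n - 1 then pNx x (i+1) else false) i)
            ((fun i => if i = m - 1 then xor (pNx x (n-1)) (u && pxor (extF x) n)
              else false) i) := by
    intro i hi
    rw [extF_lt (tX (m := m) x u) hi]
    show (xor (if i + 2 < n then pNx x (i+1) else false)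
      (if i + 1 = m then xor (pNx x (n-1)) (u && pxor (extF x) n) else false)) = _
    simp only [show (i + 2 < n) ↔ (i + 1 < n - 1) by omega,
      show (i + 1 = m) ↔ (i = m - 1) by omega]
  rw [pxor_congr m e1, pxor_xor, pxor_shift (n-1) (pNx x) (pNx_zero x), pxor_delta]
  rw [show min (m+1) (n-1) = n - 1 by omega, if_pos (show m - 1 < m by omega)]
  rw [pxor_last (pNx x) (show 0 < n by omega)]
  generalize pxor (pNx x) (n-1) = a
  generalize pNx x (n-1) = b
  generalize (u && pxor (extF x) n) = d
  cases a <;> cases b <;> cases d <;> rfl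

lemma parX_eq {n : ℕ} (x : Fin n → Bool) :
    pxor (extF x) n = decide (hw x % 2 = 1) := by
  rw [(pxor_parity (extF x) n).1, cnt_hw]

lemma e2X_eq {n : ℕ} (x : Fin n → Bool) :
    pxor (pNx x) n = decide ((hw x / 2) % 2 = 1) := by
  have h := (pxor_parity (extF x) n).2
  rw [cnt_hw] at h
  exact h

lemma card_parity (m : ℕ) (hm : 0 < m) (b : ℕ) (hb : b < 2) :
    ((Finset.univ.filter fun z : Fin m → Bool => hw z % 2 = b).card) = 2^(m-1) := by
  classical
  set i0 : Fin m := ⟨0, hm⟩ with hi0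
  have hsum : ∀ z : Fin m → Bool,
      hw z = (if z i0 = true then 1 else 0) + ∑ j ∈ Finset.univ.erase i0,
        (if z j = true then 1 else 0) := by
    intro z
    rw [hw, Finset.card_filter]
    exact (Finset.add_sum_erase Finset.univ _ (Finset.mem_univ i0)).symm
  have hupd : ∀ z : Fin m → Bool,
      hw (Function.update z i0 (!(z i0)))
        = (if (!(z i0)) = true then 1 else 0) + ∑ j ∈ Finset.univ.erase i0,
          (if z j = true then 1 else 0) := by
    intro z
    rw [hsum]
    congr 1
    exact Finset.sum_congr rfl fun j hj => by
      rw [Function.update_of_ne (Finset.ne_of_mem_erase hj)]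
  have hsum2 : ∀ z : Fin m → Bool,
      hw (Function.update z i0 (!(z i0))) + hw z
        = 1 + 2 * ∑ j ∈ Finset.univ.erase i0, (if z j = true then 1 else 0) := by
    intro z
    rw [hupd z, hsum z]
    cases hzi : z i0 <;> simp [hzi] <;> ring
  have hpar : ∀ (z : Fin m → Bool) (b' : ℕ), hw z % 2 = b' →
      hw (Function.update z i0 (!(z i0))) % 2 = 1 - b' := by
    intro z b' hz
    have := hsum2 z
    omega
  have hinv : ∀ z : Fin m → Bool,
      Function.update (Function.update z i0 (!(z i0))) i0
        (!(Function.update z i0 (!(z i0)) i0)) = z := by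
    intro z
    simp [Function.update_self, Function.update_idem, Bool.not_not,
      Function.update_eq_self]
  have hcard : (Finset.univ.filter fun z : Fin m → Bool => hw z % 2 = b).card
      = (Finset.univ.filter fun z : Fin m → Bool => hw z % 2 = 1 - b).card := by
    refine Finset.card_bij' (fun z _ => Function.update z i0 (!(z i0)))
      (fun z _ => Function.update z i0 (!(z i0))) ?_ ?_ ?_ ?_ <;>
      intro z hz <;>
      simp only [Finset.mem_filter, Finset.mem_univ, true_and] at hz ⊢ <;>
      first
        | exact hinv z
        | exact hpar z b hz
        | (have := hpar z (1-b) hz; omega)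
  have hpartition : (Finset.univ.filter fun z : Fin m → Bool => hw z % 2 = b).card
      + (Finset.univ.filter fun z : Fin m → Bool => hw z % 2 = 1 - b).card
      = 2 ^ m := by
    have hneg : (Finset.univ.filter fun z : Fin m → Bool => ¬ (hw z % 2 = b))
        = (Finset.univ.filter fun z : Fin m → Bool => hw z % 2 = 1 - b) := by
      apply Finset.filter_congr
      intro z _
      have := Nat.mod_lt (hw z) (show 0 < 2 by omega)
      constructor <;> intro h <;> omega
    rw [← hneg, Finset.card_filter_add_card_filter_not, Finset.card_univ]
    simp [Fintype.card_fun]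
  have hpow : 2 ^ m = 2 * 2 ^ (m - 1) := by
    rw [← pow_succ']
    congr 1
    omega
  omega

def Tinv (n m : ℕ) (t : (Fin (n+1) → Bool) × Bool × (Fin m → Bool)) :
    Fin ((n+1)+(m+1)) → Bool :=
  fun k => Fin.addCases t.1 (fun j => Fin.cases t.2.1 (fun j' => t.2.2 j') j) k

lemma Tinv_c (n m : ℕ) (c : Fin (n+1) → Bool) (u : Bool) (s : Fin m → Bool) (i : Fin (n+1)) :
    Tinv n m (c,u,s) (Fin.castAdd (m+1) i) = c i := by
  simp [Tinv]

lemma Tinv_u (n m : ℕ) (c : Fin (n+1) → Bool) (u : Bool) (s : Fin m → Bool) :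
    Tinv n m (c,u,s) (Fin.natAdd (n+1) 0) = u := by
  simp [Tinv]

lemma Tinv_s (n m : ℕ) (c : Fin (n+1) → Bool) (u : Bool) (s : Fin m → Bool) (j : Fin m) :
    Tinv n m (c,u,s) (Fin.natAdd (n+1) j.succ) = s j := by
  simp [Tinv]

lemma Tinv_bij (n m : ℕ) : Function.Bijective (Tinv n m) := by
  constructor
  · intro t1 t2 h
    obtain ⟨c1, u1, s1⟩ := t1
    obtain ⟨c2, u2, s2⟩ := t2
    have hc : c1 = c2 := funext fun i => by
      have := congrFun h (Fin.castAdd (m+1) i)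
      rwa [Tinv_c, Tinv_c] at this
    have hu : u1 = u2 := by
      have := congrFun h (Fin.natAdd (n+1) 0)
      rwa [Tinv_u, Tinv_u] at this
    have hs : s1 = s2 := funext fun j => by
      have := congrFun h (Fin.natAdd (n+1) j.succ)
      rwa [Tinv_s, Tinv_s] at this
    rw [hc, hu, hs]
  · intro w
    refine ⟨(fun i => w (Fin.castAdd (m+1) i), w (Fin.natAdd (n+1) 0),
      fun j => w (Fin.natAdd (n+1) j.succ)), ?_⟩
    funext k
    refine Fin.addCases (fun i => ?_) (fun j => ?_) k
    · exact Tinv_c n m _ _ _ i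
    · refine Fin.cases ?_ (fun j' => ?_) j
      · exact Tinv_u n m _ _ _
      · exact Tinv_s n m _ _ _ j'

def fdef (n m : ℕ) (w : Fin ((n+1)+(m+1)) → Bool) : Fin (n + m) → Bool :=
  Fin.addCases (xOf (fun i => w (Fin.castAdd (m+1) i)))
    (fun j : Fin m =>
      xor (xor (w (Fin.natAdd (n+1) (Fin.succ j))) (w (Fin.natAdd (n+1) (Fin.succ (cyc j)))))
        (tC (fun i => w (Fin.castAdd (m+1) i)) (w (Fin.natAdd (n+1) 0)) j))

lemma fdef_Tinv (n m : ℕ) (c : Fin (n+1) → Bool) (u : Bool) (s : Fin m → Bool) :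
    fdef n m (Tinv n m (c,u,s)) =
      Fin.addCases (xOf c) (fun j => xor (xor (s j) (s (cyc j))) (tC c u j)) := by
  unfold fdef
  simp only [Tinv_c, Tinv_u, Tinv_s]

lemma addCases_eq_iff {n m : ℕ} (a : Fin n → Bool) (b : Fin m → Bool) (z : Fin (n+m) → Bool) :
    (Fin.addCases a b : ∀ _ : Fin (n+m), Bool) = z ↔
      a = (splitFun n m z).1 ∧ b = (splitFun n m z).2 := by
  constructor
  · rintro rfl
    constructor
    · funext i; simp [splitFun]
    · funext j; simp [splitFun]
  · rintro ⟨h1, h2⟩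
    funext k
    refine Fin.addCases (fun i => ?_) (fun j => ?_) k
    · rw [Fin.addCases_left, h1]; rfl
    · rw [Fin.addCases_right, h2]; rfl

lemma bxor_eq_iff (A t y : Bool) : (xor A t = y) ↔ (A = xor y t) := by
  cases A <;> cases t <;> cases y <;> simp

lemma sum_ite_card {α : Type*} [Fintype α] (P : α → Prop) [DecidablePred P] (q : ℝ) :
    (∑ a, if P a then q else 0) = ((Finset.univ.filter P).card : ℝ) * q := by
  rw [← Finset.sum_filter, Finset.sum_const, nsmul_eq_mul]

lemma card_le_6 {α : Type*} [DecidableEq α] (a b c d e f : α) :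
    ({a,b,c,d,e,f} : Finset α).card ≤ 6 := by
  apply le_trans (Finset.card_insert_le _ _)
  apply Nat.succ_le_succ
  apply le_trans (Finset.card_insert_le _ _)
  apply Nat.succ_le_succ
  apply le_trans (Finset.card_insert_le _ _)
  apply Nat.succ_le_succ
  apply le_trans (Finset.card_insert_le _ _)
  apply Nat.succ_le_succ
  apply le_trans (Finset.card_insert_le _ _)
  apply Nat.succ_le_succ
  simp

end St12
open St12 in
theorem stmt12 (n m : ℕ) (hn : 1 ≤ n) (hm : n - 1 ≤ m) :
    ∃ (M : ℕ) (f : (Fin M → Bool) → Fin (n + m) → Bool),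
      IsLocal 6 f ∧ push f (fun _ => (1 / 2 : ℝ) ^ M) = dHardStar' n m := by
  classical
  rcases Nat.eq_zero_or_pos m with hm0 | hmpos
  · -- degenerate case : m = 0, n = 1
    subst hm0
    have hn1 : n = 1 := by omega
    subst hn1
    refine ⟨1, id, fun i => ⟨{i}, by simp, fun x y h => h i (by simp)⟩, ?_⟩
    funext z
    simp only [push, id_eq]
    rw [Finset.sum_ite_eq' Finset.univ z (fun _ => ((1:ℝ)/2)^1)]
    rw [if_pos (Finset.mem_univ z)]
    rw [dHardStar', dHardStar]
    have hwy : hw (splitFun 1 0 z).2 = 0 := by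
      rw [hw]
      simp
    have hcard1 : ((Finset.univ.filter fun y : Fin 0 → Bool => hw y % 2 = 0).card) = 1 := by
      rw [show (Finset.univ : Finset (Fin 0 → Bool)) = {fun j => j.elim0} from by
        apply Finset.eq_singleton_iff_unique_mem.2
        exact ⟨Finset.mem_univ _, fun y _ => funext fun j => j.elim0⟩]
      rw [Finset.filter_singleton]
      rw [if_pos (by rw [hw]; simp)]
      simp
    have hwx : hw (splitFun 1 0 z).1 = if (splitFun 1 0 z).1 0 = true then 1 else 0 := by
      rw [hw, show (Finset.univ : Finset (Fin 1)) = {0} from by simp,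
        Finset.filter_singleton]
      split <;> simp
    by_cases hz : (splitFun 1 0 z).1 0 = true
    · rw [hwx, if_pos hz]
      norm_num
    · rw [hwx, if_neg hz]
      rw [if_neg (by norm_num), unifParity, hwy, if_pos (by norm_num), hcard1]
      norm_num
  · -- main case
    refine ⟨(n+1)+(m+1), fdef n m, ?_, ?_⟩
    · -- locality
      intro i
      refine Fin.addCases (fun i' => ?_) (fun j => ?_) i
      · refine ⟨{Fin.castAdd (m+1) i'.castSucc, Fin.castAdd (m+1) i'.succ,
          Fin.castAdd (m+1) i'.castSucc, Fin.castAdd (m+1) i'.castSucc,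
          Fin.castAdd (m+1) i'.castSucc, Fin.castAdd (m+1) i'.castSucc},
          card_le_6 _ _ _ _ _ _, ?_⟩
        intro w1 w2 hagree
        have e1 := hagree (Fin.castAdd (m+1) i'.castSucc) (by simp)
        have e2 := hagree (Fin.castAdd (m+1) i'.succ) (by simp)
        simp only [fdef, Fin.addCases_left, xOf]
        rw [e1, e2]
      · set a1 := Fin.natAdd (n+1) (Fin.succ j) with ha1
        set a2 := Fin.natAdd (n+1) (Fin.succ (cyc j)) with ha2
        by_cases h1 : j.val + 2 < n
        · have h2 : ¬ (j.val + 1 = m) := by omega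
          refine ⟨{a1, a2, Fin.castAdd (m+1) (⟨0, by omega⟩ : Fin (n+1)),
            Fin.castAdd (m+1) (⟨j.val+1, by omega⟩ : Fin (n+1)),
            Fin.castAdd (m+1) (⟨j.val+2, by omega⟩ : Fin (n+1)),
            Fin.castAdd (m+1) (⟨0, by omega⟩ : Fin (n+1))},
            card_le_6 _ _ _ _ _ _, ?_⟩
          intro w1 w2 hagree
          have hc : ∀ (k : ℕ) (hk : k < n+1),
              Fin.castAdd (m+1) (⟨k, hk⟩ : Fin (n+1)) ∈
                ({a1, a2, Fin.castAdd (m+1) (⟨0, by omega⟩ : Fin (n+1)),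
                Fin.castAdd (m+1) (⟨j.val+1, by omega⟩ : Fin (n+1)),
                Fin.castAdd (m+1) (⟨j.val+2, by omega⟩ : Fin (n+1)),
                Fin.castAdd (m+1) (⟨0, by omega⟩ : Fin (n+1))} : Finset _) →
              extF (fun i => w1 (Fin.castAdd (m+1) i)) k
                = extF (fun i => w2 (Fin.castAdd (m+1) i)) k := by
            intro k hk hmem
            rw [extF_lt _ hk, extF_lt _ hk]
            exact hagree _ hmem
          simp only [fdef, Fin.addCases_right, tC, if_pos h1, if_neg h2]
          rw [hc 0 (by omega) (by simp), hc (j.val+1) (by omega) (by simp),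
            hc (j.val+2) (by omega) (by simp),
            hagree a1 (by simp), hagree a2 (by simp)]
        · by_cases h2 : j.val + 1 = m
          · refine ⟨{a1, a2, Fin.castAdd (m+1) (⟨0, by omega⟩ : Fin (n+1)),
              Fin.castAdd (m+1) (⟨n-1, by omega⟩ : Fin (n+1)),
              Fin.castAdd (m+1) (⟨n, by omega⟩ : Fin (n+1)),
              Fin.natAdd (n+1) 0},
              card_le_6 _ _ _ _ _ _, ?_⟩
            intro w1 w2 hagree
            have hc : ∀ (k : ℕ) (hk : k < n+1),
                Fin.castAdd (m+1) (⟨k, hk⟩ : Fin (n+1)) ∈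
                  ({a1, a2, Fin.castAdd (m+1) (⟨0, by omega⟩ : Fin (n+1)),
                  Fin.castAdd (m+1) (⟨n-1, by omega⟩ : Fin (n+1)),
                  Fin.castAdd (m+1) (⟨n, by omega⟩ : Fin (n+1)),
                  Fin.natAdd (n+1) 0} : Finset _) →
                extF (fun i => w1 (Fin.castAdd (m+1) i)) k
                  = extF (fun i => w2 (Fin.castAdd (m+1) i)) k := by
              intro k hk hmem
              rw [extF_lt _ hk, extF_lt _ hk]
              exact hagree _ hmem
            simp only [fdef, Fin.addCases_right, tC, if_neg h1, if_pos h2]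
            rw [hc 0 (by omega) (by simp), hc (n-1) (by omega) (by simp),
              hc n (by omega) (by simp),
              hagree a1 (by simp), hagree a2 (by simp),
              hagree (Fin.natAdd (n+1) 0) (by simp)]
          · refine ⟨{a1, a2, a1, a1, a1, a1}, card_le_6 _ _ _ _ _ _, ?_⟩
            intro w1 w2 hagree
            simp only [fdef, Fin.addCases_right, tC, if_neg h1, if_neg h2]
            rw [hagree a1 (by simp), hagree a2 (by simp)]
    · -- distribution identity
      funext z
      simp only [push]
      set q : ℝ := ((1:ℝ)/2)^((n+1)+(m+1)) with hq
      rw [dHardStar', dHardStar]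
      set X := (splitFun n m z).1 with hX
      set Y := (splitFun n m z).2 with hY
      have hre := Fintype.sum_bijective (Tinv n m) (Tinv_bij n m)
        (fun t => if fdef n m (Tinv n m t) = z then q else 0)
        (fun w => if fdef n m w = z then q else 0)
        (fun t => rfl)
      rw [← hre]
      have hcond : ∀ (c : Fin (n+1) → Bool) (u : Bool) (s : Fin m → Bool),
          (fdef n m (Tinv n m (c,u,s)) = z) ↔
            (xOf c = X ∧ ∀ j, xor (s j) (s (cyc j)) = xor (Y j) (tC c u j)) := by
        intro c u s
        rw [fdef_Tinv, addCases_eq_iff]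
        apply and_congr Iff.rfl
        rw [funext_iff]
        exact forall_congr' fun j => bxor_eq_iff _ _ _
      have hsummand : ∀ (c : Fin (n+1) → Bool) (u : Bool) (s : Fin m → Bool),
          (if fdef n m (Tinv n m (c,u,s)) = z then q else 0)
            = if xOf c = X then
                (if (∀ j, xor (s j) (s (cyc j)) = xor (Y j) (tX X u j)) then q else 0)
              else 0 := by
        intro c u s
        simp only [hcond]
        by_cases hP : xOf c = X
        · have ht : ∀ j : Fin m, tC c u j = tX X u j := fun j => by
            rw [tC_eq_tX hn, hP]
          simp [hP, ht]
        · simp [hP]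
      simp only [Fintype.sum_prod_type]
      simp only [hsummand]
      have hpull : ∀ c : Fin (n+1) → Bool,
          (∑ u : Bool, ∑ s : Fin m → Bool, if xOf c = X then
            (if (∀ j, xor (s j) (s (cyc j)) = xor (Y j) (tX X u j)) then q else 0) else 0)
          = if xOf c = X then
              (∑ u : Bool, ∑ s : Fin m → Bool,
                if (∀ j, xor (s j) (s (cyc j)) = xor (Y j) (tX X u j)) then q else 0)
            else 0 := by
        intro c
        by_cases hP : xOf c = X <;> simp [hP]
      simp only [hpull]
      rw [sum_ite_card (fun c : Fin (n+1) → Bool => xOf c = X), card_c]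
      have hinner : ∀ u : Bool,
          (∑ s : Fin m → Bool,
            if (∀ j, xor (s j) (s (cyc j)) = xor (Y j) (tX X u j)) then q else 0)
          = (if xor (pxor (extF Y) m)
                (xor (pxor (pNx X) n) (u && pxor (extF X) n)) = false
             then (2:ℕ) else 0) * q := by
        intro u
        rw [sum_ite_card]
        congr 1
        rw [card_s hmpos (fun j => xor (Y j) (tX X u j))]
        have hsplit : pxor (extF (fun j => xor (Y j) (tX (m := m) X u j))) m
            = xor (pxor (extF Y) m) (pxor (extF (tX (m := m) X u)) m) := by
          rw [← pxor_xor]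
          apply pxor_congr
          intro i hi
          rw [extF_lt _ hi, extF_lt _ hi, extF_lt _ hi]
        rw [hsplit, pxor_tX hn hmpos hm X u]
      simp only [hinner]
      rw [Fintype.sum_bool]
      rw [parX_eq X, e2X_eq X, parX_eq Y]
      set A := decide (hw Y % 2 = 1) with hA
      set B := decide (hw X / 2 % 2 = 1) with hB
      by_cases hodd : hw X % 2 = 1
      · rw [if_pos hodd]
        have hPX : decide (hw X % 2 = 1) = true := by simp [hodd]
        rw [hPX]
        have hval : (((if (A ^^ (B ^^ (true && true))) = false then (2:ℕ) else 0) : ℕ) : ℝ) * q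
            + (((if (A ^^ (B ^^ (false && true))) = false then (2:ℕ) else 0) : ℕ) : ℝ) * q
            = 2 * q := by
          cases A <;> cases B <;> norm_num <;> ring
        rw [hval, hq, show (n+1)+(m+1) = (n+m)+2 by omega, pow_add, pow_add]
        push_cast
        ring
      · rw [if_neg hodd, unifParity,
          card_parity m hmpos ((hw X / 2) % 2) (by omega)]
        have hPX : decide (hw X % 2 = 1) = false := by simp [hodd]
        rw [hPX]
        have hval : (((if (A ^^ (B ^^ (true && false))) = false then (2:ℕ) else 0) : ℕ) : ℝ) * q
            + (((if (A ^^ (B ^^ (false && false))) = false then (2:ℕ) else 0) : ℕ) : ℝ) * q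
            = (if (A ^^ B) = false then (4:ℝ) else 0) * q := by
          cases A <;> cases B <;> norm_num <;> ring
        rw [hval]
        have hAB : ((A ^^ B) = false) ↔ (hw Y % 2 = hw X / 2 % 2) := by
          rw [hA, hB]
          rcases Nat.mod_two_eq_zero_or_one (hw Y) with h | h <;>
            rcases Nat.mod_two_eq_zero_or_one (hw X / 2) with h' | h' <;>
            simp [h, h']
        by_cases hYX : hw Y % 2 = hw X / 2 % 2
        · rw [if_pos (hAB.2 hYX), if_pos hYX]
          rw [hq, show (n+1)+(m+1) = (n+(m-1))+3 by omega, pow_add, pow_add]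
          push_cast
          rw [show ((1:ℝ)/2)^(m-1) = (((2:ℝ)^(m-1))⁻¹) by rw [one_div, inv_pow]]
          field_simp
          ring
        · rw [if_neg (fun h => hYX (hAB.1 h)), if_neg hYX]
          ring
end

section
/- Let P_1, …, P_ℓ and Q be distributions on a common finite sample space, and let φ be a function on that space with values in the real interval [a,b] where a < b. Let η_1 ≥ 0 and 0 ≤ η_2 ≤ b − a, and assume that for each i ∈ [ℓ], either the total variation distance between P_i and Q is at least 1 − η_1, or E_{X~Q}[φ(X)] − E_{X~P_i}[φ(X)] ≥ η_2. Then for any distribution P expressible as a convex combination of P_1, …, P_ℓ, the total variation distance between P and Q is at least η_2/(b−a) − (ℓ+1)·η_1. -/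
/-!
Rescale `φ` to `ψ = (b - φ) / (b - a) ∈ [0, 1]`, so that the gap hypothesis becomes
`E_{P_i} ψ - E_Q ψ ≥ τ := η₂ / (b - a)`. For each `P_i` with `|P_i - Q|_TV ≥ 1 - η₁` the event
`{Q < P_i}` has `Q`-mass at most `η₁` and `P_i`-mass at least `1 - η₁`; their union `U` has
`Q(U) ≤ ℓ η₁`. The test function equal to `1` on `U` and to `ψ` off `U` takes values in `[0, 1]`
and separates every `P_i` from `Q` by at least `τ - (ℓ + 1) η₁`. Such a separation survives
convex combinations, and any `[0, 1]`-valued test separates two distributions by at most their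
total variation distance.
-/

open Finset

namespace Finset

theorem sum_biUnion_le_sum_sum {ι α M : Type*} [DecidableEq α] [AddCommMonoid M] [PartialOrder M]
    [IsOrderedAddMonoid M] {f : α → M} (hf : ∀ x, 0 ≤ f x) (s : Finset ι) (t : ι → Finset α) :
    ∑ x ∈ s.biUnion t, f x ≤ ∑ i ∈ s, ∑ x ∈ t i, f x := by
  rw [← sup_eq_biUnion]
  refine apply_sup_le_sum (f := fun u => ∑ x ∈ u, f x) sum_empty (fun {u v} => ?_) s
  rw [sup_eq_union, ← sum_union_inter]
  exact le_add_of_nonneg_right (sum_nonneg fun x _ => hf x)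

end Finset

section TotalVariation

variable {α : Type*} [Fintype α]

theorem sum_sub_mul_le_tv {p q : α → ℝ} (hpq : ∑ x, p x = ∑ x, q x) {f : α → ℝ}
    (hf : ∀ x, f x ∈ Set.Icc 0 1) : ∑ x, (p x - q x) * f x ≤ tv p q := by
  have hcentre : ∑ x, (p x - q x) * f x = ∑ x, (p x - q x) * (f x - 1 / 2) := by
    simp only [mul_sub, sum_sub_distrib, ← sum_mul, hpq, sub_self, zero_mul, sub_zero]
  rw [hcentre, tv, mul_sum]
  refine sum_le_sum fun x _ => ?_
  have hf' : |f x - 1 / 2| ≤ 1 / 2 := abs_le.2 ⟨by linarith [(hf x).1], by linarith [(hf x).2]⟩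
  calc (p x - q x) * (f x - 1 / 2) ≤ |p x - q x| * |f x - 1 / 2| := by
        rw [← abs_mul]; exact le_abs_self _
    _ ≤ 1 / 2 * |p x - q x| := by nlinarith [abs_nonneg (p x - q x)]

theorem tv_eq_sum_filter_lt {p q : α → ℝ} (hpq : ∑ x, p x = ∑ x, q x) :
    tv p q = ∑ x with q x < p x, (p x - q x) := by
  have hpos_part : ∀ x, (if q x < p x then p x - q x else 0) = (|p x - q x| + (p x - q x)) / 2 := by
    intro x
    split_ifs with h
    · rw [abs_of_pos (sub_pos.2 h)]; ring
    · rw [abs_of_nonpos (by linarith)]; ring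
  rw [sum_filter, sum_congr rfl fun x _ => hpos_part x, ← sum_div, sum_add_distrib, sum_sub_distrib,
    hpq, tv]
  ring

theorem sum_filter_lt_le_and_le_of_one_sub_le_tv {p q : α → ℝ} (hp : IsDist p) (hq : IsDist q)
    {η : ℝ} (h : 1 - η ≤ tv p q) :
    ∑ x with q x < p x, q x ≤ η ∧ 1 - η ≤ ∑ x with q x < p x, p x := by
  rw [tv_eq_sum_filter_lt (hp.2.trans hq.2.symm), sum_sub_distrib] at h
  have hp_le : ∑ x with q x < p x, p x ≤ 1 :=
    hp.2 ▸ sum_le_sum_of_subset_of_nonneg (subset_univ _) fun x _ _ => hp.1 x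
  have hq_nonneg : 0 ≤ ∑ x with q x < p x, q x := sum_nonneg fun x _ => hq.1 x
  constructor <;> linarith

theorem exists_finset_sum_le_and_forall_le_of_one_sub_le_tv {ι : Type*} {P : ι → α → ℝ}
    {Q : α → ℝ} (hP : ∀ i, IsDist (P i)) (hQ : IsDist Q) {η : ℝ} (A : Finset ι)
    (hA : ∀ i ∈ A, 1 - η ≤ tv (P i) Q) :
    ∃ U : Finset α, ∑ x ∈ U, Q x ≤ #A * η ∧ ∀ i ∈ A, 1 - η ≤ ∑ x ∈ U, P i x := by
  classical
  let S : ι → Finset α := fun i => {x | Q x < P i x}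
  have hS i (hi : i ∈ A) := sum_filter_lt_le_and_le_of_one_sub_le_tv (hP i) hQ (hA i hi)
  refine ⟨A.biUnion S, ?_, fun i hi => (hS i hi).2.trans ?_⟩
  · calc ∑ x ∈ A.biUnion S, Q x ≤ ∑ i ∈ A, ∑ x ∈ S i, Q x := sum_biUnion_le_sum_sum hQ.1 A S
      _ ≤ ∑ _i ∈ A, η := sum_le_sum fun i hi => (hS i hi).1
      _ = #A * η := by rw [sum_const, nsmul_eq_mul]
  · exact sum_le_sum_of_subset_of_nonneg (subset_biUnion_of_mem S hi) fun x _ _ => (hP i).1 x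

theorem le_tv_mix_of_forall_le_sum_sub_mul {ι : Type*} [Fintype ι] {P : ι → α → ℝ} {Q : α → ℝ}
    (hPQ : ∀ i, ∑ x, P i x = ∑ x, Q x) {w : ι → ℝ} (hw : ∀ i, 0 ≤ w i) (hw1 : ∑ i, w i = 1)
    {f : α → ℝ} (hf : ∀ x, f x ∈ Set.Icc 0 1) {c : ℝ}
    (hc : ∀ i, c ≤ ∑ x, (P i x - Q x) * f x) :
    c ≤ tv (fun x => ∑ i, w i * P i x) Q := by
  have hmix (g : α → ℝ) : ∑ x, ((∑ i, w i * P i x) - Q x) * g x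
      = ∑ i, w i * ∑ x, (P i x - Q x) * g x := by
    simp only [mul_sum]
    rw [sum_comm]
    refine sum_congr rfl fun x _ => ?_
    simp only [← mul_assoc, ← sum_mul, mul_sub, sum_sub_distrib, hw1, one_mul]
  have hsum : ∑ x, (∑ i, w i * P i x) = ∑ x, Q x := by
    have h1 := hmix 1
    simp only [Pi.one_apply, mul_one, sum_sub_distrib, hPQ, sub_self, mul_zero, sum_const_zero]
      at h1
    linarith
  calc c = ∑ i, w i * c := by rw [← sum_mul, hw1, one_mul]
    _ ≤ ∑ i, w i * ∑ x, (P i x - Q x) * f x :=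
        sum_le_sum fun i _ => mul_le_mul_of_nonneg_left (hc i) (hw i)
    _ = ∑ x, ((∑ i, w i * P i x) - Q x) * f x := (hmix f).symm
    _ ≤ tv (fun x => ∑ i, w i * P i x) Q := sum_sub_mul_le_tv hsum hf

theorem le_sum_sub_mul_ite [DecidableEq α] {p q : α → ℝ} (hp : ∀ x, 0 ≤ p x)
    (hq : ∀ x, 0 ≤ q x) {ψ : α → ℝ} (hψ : ∀ x, ψ x ∈ Set.Icc 0 1) (U : Finset α) {τ δ η : ℝ}
    (hη : 0 ≤ η) (hqψ : ∑ x, q x * ψ x ≤ 1 - τ) (hqU : ∑ x ∈ U, q x ≤ δ)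
    (h : 1 - η ≤ ∑ x ∈ U, p x ∨ τ ≤ ∑ x, (p x - q x) * ψ x) :
    τ - δ - η ≤ ∑ x, (p x - q x) * if x ∈ U then 1 else ψ x := by
  set f : α → ℝ := fun x => if x ∈ U then 1 else ψ x
  have hpf_ge_U : ∑ x ∈ U, p x ≤ ∑ x, p x * f x :=
    calc ∑ x ∈ U, p x = ∑ x ∈ U, p x * f x := sum_congr rfl fun x hx => by simp [f, hx]
      _ ≤ ∑ x, p x * f x := sum_le_sum_of_subset_of_nonneg (subset_univ U) fun x _ _ =>
          mul_nonneg (hp x) (by by_cases hx : x ∈ U <;> simp [f, hx, (hψ x).1])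
  have hpf_ge_ψ : ∑ x, p x * ψ x ≤ ∑ x, p x * f x :=
    sum_le_sum fun x _ => mul_le_mul_of_nonneg_left
      (by by_cases hx : x ∈ U <;> simp [f, hx, (hψ x).2]) (hp x)
  have hqf_le : ∑ x, q x * f x ≤ ∑ x, q x * ψ x + ∑ x ∈ U, q x := by
    calc ∑ x, q x * f x ≤ ∑ x, (q x * ψ x + if x ∈ U then q x else 0) :=
          sum_le_sum fun x _ => by
            by_cases hx : x ∈ U <;> simp [f, hx, mul_nonneg, hq x, (hψ x).1]
      _ = ∑ x, q x * ψ x + ∑ x ∈ U, q x := by rw [sum_add_distrib, sum_ite_mem, univ_inter]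
  simp only [sub_mul, sum_sub_distrib] at h ⊢
  rcases h with hpU | hgap <;> linarith

theorem le_tv_mix_of_forall_one_sub_le_tv_or_le {ι : Type*} [Fintype ι] {P : ι → α → ℝ}
    {Q : α → ℝ} (hP : ∀ i, IsDist (P i)) (hQ : IsDist Q) {ψ : α → ℝ}
    (hψ : ∀ x, ψ x ∈ Set.Icc 0 1) {τ η : ℝ} (hτ : τ ≤ 1) (hη : 0 ≤ η)
    (halt : ∀ i, 1 - η ≤ tv (P i) Q ∨ τ ≤ ∑ x, (P i x - Q x) * ψ x)
    {w : ι → ℝ} (hw : ∀ i, 0 ≤ w i) (hw1 : ∑ i, w i = 1) :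
    τ - (Fintype.card ι + 1) * η ≤ tv (fun x => ∑ i, w i * P i x) Q := by
  classical
  set A : Finset ι := {i | 1 - η ≤ tv (P i) Q}
  obtain ⟨U, hQU, hPU⟩ := exists_finset_sum_le_and_forall_le_of_one_sub_le_tv hP hQ A
    fun i hi => (mem_filter.1 hi).2
  have hQU' : ∑ x ∈ U, Q x ≤ Fintype.card ι * η :=
    hQU.trans (mul_le_mul_of_nonneg_right (by exact_mod_cast card_le_univ A) hη)
  -- A `P i` that is not TV-far from `Q` forces `E_Q ψ ≤ 1 - τ`; if there is none, `0` serves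
  -- as `ψ`.
  obtain ⟨ψ', hψ', hQψ', halt'⟩ : ∃ ψ' : α → ℝ, (∀ x, ψ' x ∈ Set.Icc 0 1) ∧
      ∑ x, Q x * ψ' x ≤ 1 - τ ∧
      ∀ i, 1 - η ≤ ∑ x ∈ U, P i x ∨ τ ≤ ∑ x, (P i x - Q x) * ψ' x := by
    by_cases! hA : ∀ i, i ∈ A
    · exact ⟨0, by simp, by simpa using hτ, fun i => .inl (hPU i (hA i))⟩
    obtain ⟨i₀, hi₀⟩ := hA
    refine ⟨ψ, hψ, ?_, fun i => (halt i).imp_left fun h => hPU i (by simpa [A] using h)⟩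
    have hgap := (halt i₀).resolve_left (by simpa [A] using hi₀)
    have hPψ : ∑ x, P i₀ x * ψ x ≤ 1 :=
      calc ∑ x, P i₀ x * ψ x ≤ ∑ x, P i₀ x :=
            sum_le_sum fun x _ => mul_le_of_le_one_right ((hP i₀).1 x) (hψ x).2
        _ = 1 := (hP i₀).2
    simp only [sub_mul, sum_sub_distrib] at hgap
    linarith
  refine le_tv_mix_of_forall_le_sum_sub_mul (fun i => (hP i).2.trans hQ.2.symm) hw hw1
    (f := fun x => if x ∈ U then 1 else ψ' x) (fun x => ?_) fun i => ?_
  · split_ifs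
    exacts [⟨zero_le_one, le_rfl⟩, hψ' x]
  · have := le_sum_sub_mul_ite (hP i).1 hQ.1 hψ' U hη hQψ' hQU' (halt' i)
    linarith

end TotalVariation

theorem stmt14_general {α : Type*} [Fintype α] (l : ℕ) (P : Fin l → α → ℝ) (Q : α → ℝ)
    (hP : ∀ i, IsDist (P i)) (hQ : IsDist Q)
    (φ : α → ℝ) (a b : ℝ) (hab : a < b) (hφ : ∀ x, φ x ∈ Set.Icc a b)
    (η₁ η₂ : ℝ) (hη₁ : 0 ≤ η₁) (hη₂ : η₂ ≤ b - a)
    (halt : ∀ i : Fin l,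
      1 - η₁ ≤ tv (P i) Q ∨ η₂ ≤ (∑ x, Q x * φ x) - ∑ x, P i x * φ x)
    (w : Fin l → ℝ) (hw : ∀ i, 0 ≤ w i) (hw1 : ∑ i, w i = 1) :
    η₂ / (b - a) - ((l : ℝ) + 1) * η₁ ≤ tv (fun x => ∑ i, w i * P i x) Q := by
  have hba : 0 < b - a := sub_pos.2 hab
  set ψ : α → ℝ := fun x => (b - φ x) / (b - a)
  have hψ x : ψ x ∈ Set.Icc 0 1 :=
    ⟨div_nonneg (by linarith [(hφ x).2]) hba.le, (div_le_one hba).2 (by linarith [(hφ x).1])⟩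
  have hgap i : ∑ x, (P i x - Q x) * ψ x = ((∑ x, Q x * φ x) - ∑ x, P i x * φ x) / (b - a) := by
    simp only [ψ, mul_div_assoc', ← sum_div, mul_sub, sub_mul, sum_sub_distrib, ← sum_mul,
      (hP i).2, hQ.2]
    ring
  have halt' i : 1 - η₁ ≤ tv (P i) Q ∨ η₂ / (b - a) ≤ ∑ x, (P i x - Q x) * ψ x :=
    (halt i).imp_right fun h => hgap i ▸ div_le_div_of_nonneg_right h hba.le
  simpa using le_tv_mix_of_forall_one_sub_le_tv_or_le hP hQ hψ ((div_le_one hba).2 hη₂) hη₁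
    halt' hw hw1

theorem stmt14 {α : Type*} [Fintype α] (l : ℕ) (P : Fin l → α → ℝ) (Q : α → ℝ)
    (hP : ∀ i, IsDist (P i)) (hQ : IsDist Q)
    (φ : α → ℝ) (a b : ℝ) (hab : a < b) (hφ : ∀ x, φ x ∈ Set.Icc a b)
    (η₁ η₂ : ℝ) (hη₁ : 0 ≤ η₁) (hη₂0 : 0 ≤ η₂) (hη₂ : η₂ ≤ b - a)
    (halt : ∀ i : Fin l,
      1 - η₁ ≤ tv (P i) Q ∨ η₂ ≤ (∑ x, Q x * φ x) - ∑ x, P i x * φ x)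
    (w : Fin l → ℝ) (hw : ∀ i, 0 ≤ w i) (hw1 : ∑ i, w i = 1) :
    η₂ / (b - a) - ((l : ℝ) + 1) * η₁ ≤ tv (fun x => ∑ i, w i * P i x) Q :=
  stmt14_general l P Q hP hQ φ a b hab hφ η₁ η₂ hη₁ hη₂ halt w hw hw1
end

section
/- Let P and Q be distributions on a common finite sample space with total variation distance at most ε, and let E be an event with P(E) > 0 and Q(E) > 0. Let P' and Q' be the conditional distributions of P and Q given E, respectively. Then for any function f on the sample space, the total variation distance between f(P') and f(Q') is at most 2ε/Q(E). -/
open Finset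

theorem stmt15 {α β : Type*} [Fintype α] [Fintype β] [DecidableEq β]
    (P Q : α → ℝ) (hP : IsDist P) (hQ : IsDist Q) (ε : ℝ) (hPQ : tv P Q ≤ ε)
    (E : α → Prop) [DecidablePred E]
    (hPE : 0 < ∑ x, if E x then P x else 0)
    (hQE : 0 < ∑ x, if E x then Q x else 0)
    (f : α → β) :
    tv (push f (fun x => if E x then P x / (∑ y, if E y then P y else 0) else 0))
        (push f (fun x => if E x then Q x / (∑ y, if E y then Q y else 0) else 0)) ≤
      2 * ε / (∑ x, if E x then Q x else 0) := by
  set pE := ∑ x, if E x then P x else 0 with hpE_def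
  set qE := ∑ x, if E x then Q x else 0 with hqE_def
  have hpE : 0 < pE := hPE
  have hqE : 0 < qE := hQE
  have hε : 0 ≤ ε := by
    refine le_trans ?_ hPQ
    unfold tv
    positivity
  have hS : ∑ x, |P x - Q x| ≤ 2 * ε := by
    unfold tv at hPQ; linarith
  have hSE : (∑ x, if E x then |P x - Q x| else 0) ≤ 2 * ε := by
    refine le_trans ?_ hS
    refine Finset.sum_le_sum fun x _ => ?_
    split <;> simp [abs_nonneg]
  have hdiff : |pE - qE| ≤ 2 * ε := by
    refine le_trans ?_ hSE
    rw [hpE_def, hqE_def, ← Finset.sum_sub_distrib]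
    refine (Finset.abs_sum_le_sum_abs _ _).trans ?_
    refine Finset.sum_le_sum fun x _ => ?_
    split_ifs <;> simp
  have hterm : ∀ x, |(if E x then P x / pE else 0) - (if E x then Q x / qE else 0)|
      ≤ (if E x then |P x - Q x| else 0) / qE
        + (if E x then P x else 0) * (|pE - qE| / (pE * qE)) := by
    intro x
    split_ifs with h
    · have key : P x / pE - Q x / qE = (P x - Q x)/qE + P x * ((qE - pE)/(pE*qE)) := by
        field_simp
        ring
      rw [key]
      refine (abs_add_le _ _).trans ?_
      rw [abs_div, abs_of_pos hqE, abs_mul, abs_of_nonneg (hP.1 x), abs_div,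
        abs_of_pos (mul_pos hpE hqE), abs_sub_comm qE pE]
    · simp
  have hsum : ∑ x, |(if E x then P x / pE else 0) - (if E x then Q x / qE else 0)|
      ≤ (∑ x, if E x then |P x - Q x| else 0) / qE + pE * (|pE - qE| / (pE * qE)) := by
    refine le_trans (Finset.sum_le_sum fun x _ => hterm x) ?_
    rw [Finset.sum_add_distrib, ← Finset.sum_div, ← Finset.sum_mul]
  have hfinal : tv (fun x => if E x then P x / pE else 0)
      (fun x => if E x then Q x / qE else 0) ≤ 2 * ε / qE := by
    unfold tv
    have h2 : pE * (|pE - qE| / (pE * qE)) = |pE - qE| / qE := by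
      field_simp
    rw [h2] at hsum
    have ha : (∑ x, if E x then |P x - Q x| else 0) / qE ≤ 2 * ε / qE := by gcongr
    have hb : |pE - qE| / qE ≤ 2 * ε / qE := by gcongr
    linarith
  exact le_trans (tv_push_le f _ _) hfinal
end
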